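/- arXiv:1704.04342 — 9 statements merged into one kernel-verified Lean document; each statement's English description precedes it below -/
import Mathlib

section
/- Let Y₁, …, Y_n be i.i.d. real-valued random variables whose common law is atomless, let ε, δ ∈ (0,1), and let q_{1−ε} = inf{t ∈ ℝ : P(Y₁ ≤ t) ≥ 1−ε} be the (1−ε)-quantile. (a) If 1−(1−ε)^n ≥ 1−δ, then i* = min{r ∈ {1,…,n} : Σ_{k=0}^{r−1} C(n,k)(1−ε)^k ε^{n−k} ≥ 1−δ} is well-defined and the i*-th order statistic Y_(i*) is a 1−δ confidence upper bound for q_{1−ε}, i.e., P(Y_(i*) ≥ q_{1−ε}) ≥ 1−δ. (b) If 1−(1−ε)^n < 1−δ, then for every r ∈ {1,…,n}, P(Y_(r) ≥ q_{1−ε}) < 1−δ, i.e., no order statistic is a valid 1−δ confidence upper bound. -/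
open MeasureTheory ProbabilityTheory

/-- The `r`-th order statistic (1-based) of the finite tuple `v`: the `r`-th smallest value
among `v 0, …, v (n-1)` (junk value `0` if `r` is out of range). -/
noncomputable def orderStat {n : ℕ} (v : Fin n → ℝ) (r : ℕ) : ℝ :=
  if h : r - 1 < n then v (Tuple.sort v ⟨r - 1, h⟩) else 0

/-!
`Y_(r) ≥ q` holds exactly when fewer than `r` of the `Y i` fall below `q`. By independence the
number of indices with `Y i < q` is binomial with parameters `n` and `p = P(Y 1 < q)`, and for an
atomless law the CDF is continuous, so `p = 1 - ε` at the `(1 - ε)`-quantile. Hence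
`P(Y_(r) ≥ q) = ∑_{k<r} C(n,k) (1-ε)^k ε^(n-k)`, which increases with `r` up to its value
`1 - (1 - ε)^n` at `r = n`; both parts follow.
-/

open Finset Filter Topology

lemma Monotone.le_apply_iff_card_filter_lt_le {α : Type*} [LinearOrder α] {n : ℕ}
    {w : Fin n → α} (hw : Monotone w) (j : Fin n) (q : α) : q ≤ w j ↔ #{i | w i < q} ≤ j := by
  constructor
  · intro h
    calc #{i | w i < q} ≤ #(Iio j) := card_le_card fun i hi =>
          mem_Iio.2 (hw.reflect_lt (((mem_filter_univ i).1 hi).trans_le h))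
      _ = j := Fin.card_Iio j
  · intro h
    by_contra! hlt
    have := card_le_card fun i hi => (mem_filter_univ i).2 ((hw (mem_Iic.1 hi)).trans_lt hlt)
    rw [Fin.card_Iic] at this
    omega

lemma card_filter_comp_perm {α : Type*} [Fintype α] (σ : Equiv.Perm α) (p : α → Prop)
    [DecidablePred p] : #{i | p (σ i)} = #{i | p i} := by
  simp only [← Fintype.card_subtype]
  exact Fintype.card_congr (σ.subtypeEquiv fun _ => Iff.rfl)

lemma le_orderStat_iff {n : ℕ} (v : Fin n → ℝ) {r : ℕ} (hr : 1 ≤ r) (hrn : r ≤ n) (q : ℝ) :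
    q ≤ orderStat v r ↔ #{i | v i < q} < r := by
  have h : r - 1 < n := by omega
  rw [orderStat, dif_pos h, ← Function.comp_apply (f := v),
    (Tuple.monotone_sort v).le_apply_iff_card_filter_lt_le]
  simp only [Function.comp_apply, card_filter_comp_perm (Tuple.sort v) (fun i => v i < q)]
  omega

lemma sum_range_choose_mul_pow_mul_pow (n : ℕ) (p : ℝ) :
    ∑ k ∈ range n, (n.choose k : ℝ) * p ^ k * (1 - p) ^ (n - k) = 1 - p ^ n := by
  have h := add_pow p (1 - p) n
  rw [add_sub_cancel, one_pow, sum_range_succ, Nat.choose_self, Nat.sub_self] at h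
  simp only [pow_zero, mul_one, Nat.cast_one] at h
  have hcomm : ∑ k ∈ range n, (n.choose k : ℝ) * p ^ k * (1 - p) ^ (n - k) =
      ∑ k ∈ range n, p ^ k * (1 - p) ^ (n - k) * n.choose k :=
    sum_congr rfl fun k _ => by ring
  linarith

lemma setOf_filter_mem_eq_iInter_preimage {Ω ι α : Type*} [Fintype ι] [DecidableEq ι]
    (Y : ι → Ω → α) (s : Set α) [DecidablePred (· ∈ s)] (S : Finset ι) :
    {ω | ({i | Y i ω ∈ s} : Finset ι) = S} = ⋂ i, Y i ⁻¹' (if i ∈ S then s else sᶜ) := by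
  ext ω
  simp only [Set.mem_ofPred_eq, Finset.ext_iff, Set.mem_iInter, Set.mem_preimage]
  refine forall_congr' fun i => ?_
  split_ifs with hi <;> simp [hi]

lemma measurable_card_filter_mem {Ω ι α : Type*} [MeasurableSpace Ω] [MeasurableSpace α]
    [Fintype ι] {Y : ι → Ω → α} {s : Set α} [DecidablePred (· ∈ s)] (hY : ∀ i, Measurable (Y i))
    (hs : MeasurableSet s) :
    Measurable fun ω => #{i | Y i ω ∈ s} := by
  simp_rw [card_filter]
  exact Finset.measurable_sum _ fun i _ =>
    Measurable.ite (hY i hs) measurable_const measurable_const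

namespace ProbabilityTheory

variable {Ω ι α : Type*} [MeasurableSpace Ω] [MeasurableSpace α] [Fintype ι] [DecidableEq ι]
  {P : Measure Ω} [IsProbabilityMeasure P] {Y : ι → Ω → α} {s : Set α} [DecidablePred (· ∈ s)]
  {p : ℝ}

lemma iIndepFun.measureReal_filter_mem_eq (hindep : iIndepFun Y P)
    (hY : ∀ i, Measurable (Y i)) (hs : MeasurableSet s) (hp : ∀ i, P.real (Y i ⁻¹' s) = p)
    (S : Finset ι) :
    P.real {ω | ({i | Y i ω ∈ s} : Finset ι) = S} = p ^ #S * (1 - p) ^ (Fintype.card ι - #S) := by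
  have hmeas : ∀ i, MeasurableSet (if i ∈ S then s else sᶜ) := fun i => by
    split_ifs
    exacts [hs, hs.compl]
  have hfactor : ∀ i, P.real (Y i ⁻¹' (if i ∈ S then s else sᶜ)) = if i ∈ S then p else 1 - p :=
    fun i => by
      split_ifs
      exacts [hp i, by rw [Set.preimage_compl, probReal_compl_eq_one_sub (hY i hs), hp i]]
  rw [setOf_filter_mem_eq_iInter_preimage, measureReal_def,
    hindep.meas_iInter fun i => ⟨_, hmeas i, rfl⟩, ENNReal.toReal_prod]
  simp only [← measureReal_def, hfactor, prod_ite, prod_const, filter_mem_eq_inter, univ_inter]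
  congr
  rw [filter_not, filter_mem_eq_inter, univ_inter, card_sdiff_of_subset (subset_univ S), card_univ]

lemma iIndepFun.measureReal_card_filter_mem_eq (hindep : iIndepFun Y P)
    (hY : ∀ i, Measurable (Y i)) (hs : MeasurableSet s) (hp : ∀ i, P.real (Y i ⁻¹' s) = p)
    (k : ℕ) :
    P.real {ω | #{i | Y i ω ∈ s} = k} =
      (Fintype.card ι).choose k * p ^ k * (1 - p) ^ (Fintype.card ι - k) := by
  have hunion : {ω | #{i | Y i ω ∈ s} = k} =
      ⋃ S ∈ powersetCard k univ, {ω | ({i | Y i ω ∈ s} : Finset ι) = S} := by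
    ext ω
    simp [mem_powersetCard]
  rw [hunion, measureReal_biUnion_finset]
  · rw [sum_congr rfl fun S hS => by
      rw [hindep.measureReal_filter_mem_eq hY hs hp, (mem_powersetCard.1 hS).2],
      sum_const, card_powersetCard, card_univ, nsmul_eq_mul, mul_assoc]
  · exact fun S _ T _ hST => Set.disjoint_left.2 fun ω h₁ h₂ => hST (h₁.symm.trans h₂)
  · intro S _
    rw [setOf_filter_mem_eq_iInter_preimage]
    exact MeasurableSet.iInter fun i => hY i (by split_ifs; exacts [hs, hs.compl])

end ProbabilityTheory

lemma continuous_cdf (ν : Measure ℝ) [IsProbabilityMeasure ν] [NullSingletonClass ν] :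
    Continuous (cdf ν) := by
  refine continuous_iff_continuousAt.2 fun x => continuousAt_iff_continuous_left_right.2
    ⟨continuousWithinAt_Iio_iff_Iic.1 ?_, (cdf ν).right_continuous x⟩
  rw [(monotone_cdf ν).continuousWithinAt_Iio_iff_leftLim_eq]
  have h := (cdf ν).measure_singleton x
  rw [measure_cdf, measure_singleton, eq_comm, ENNReal.ofReal_eq_zero, sub_nonpos] at h
  exact le_antisymm ((monotone_cdf ν).leftLim_le le_rfl) h

lemma Continuous.apply_csInf_setOf_le {F : ℝ → ℝ} (hF : Continuous F) {l₀ l₁ b : ℝ}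
    (h₀ : Tendsto F atBot (𝓝 l₀)) (h₁ : Tendsto F atTop (𝓝 l₁)) (hb₀ : l₀ < b) (hb₁ : b < l₁) :
    F (sInf {t | b ≤ F t}) = b := by
  set S := {t | b ≤ F t}
  have hne : S.Nonempty := (h₁.eventually (eventually_gt_nhds hb₁)).exists.imp fun _ => le_of_lt
  obtain ⟨a, ha⟩ := eventually_atBot.1 (h₀.eventually (eventually_lt_nhds hb₀))
  have hbdd : BddBelow S := ⟨a, fun t ht => le_of_not_gt fun hta => (ha t hta.le).not_ge ht⟩
  refine le_antisymm ?_ ((isClosed_le continuous_const hF).csInf_mem hne hbdd)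
  refine le_of_tendsto (hF.continuousAt.tendsto.mono_left nhdsWithin_le_nhds :
    Tendsto F (𝓝[<] sInf S) _) ?_
  filter_upwards [self_mem_nhdsWithin] with t ht
  exact le_of_lt (not_le.1 fun h => (csInf_le hbdd h).not_gt ht)

noncomputable def quantile (ν : Measure ℝ) (p : ℝ) : ℝ :=
  sInf {t | ENNReal.ofReal p ≤ ν (Set.Iic t)}

section Quantile

variable {ν : Measure ℝ} [IsProbabilityMeasure ν] [NullSingletonClass ν] {p : ℝ}

lemma cdf_quantile (hp : p ∈ Set.Ioo 0 1) : cdf ν (quantile ν p) = p := by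
  have hset : {t | ENNReal.ofReal p ≤ ν (Set.Iic t)} = {t | p ≤ cdf ν t} := by
    ext t
    rw [Set.mem_ofPred_eq, ← ofReal_cdf, ENNReal.ofReal_le_ofReal_iff (cdf_nonneg ν t)]
    rfl
  rw [quantile, hset]
  exact (continuous_cdf ν).apply_csInf_setOf_le (tendsto_cdf_atBot ν) (tendsto_cdf_atTop ν)
    hp.1 hp.2

lemma measureReal_Iio_quantile (hp : p ∈ Set.Ioo 0 1) : ν.real (Set.Iio (quantile ν p)) = p := by
  rw [measureReal_congr (Iio_ae_eq_Iic' (measure_singleton _)), ← cdf_eq_real, cdf_quantile hp]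

end Quantile

lemma measureReal_le_orderStat {Ω : Type*} [MeasurableSpace Ω] {P : Measure Ω}
    [IsProbabilityMeasure P] {n : ℕ} {Y : Fin n → Ω → ℝ} (hY : ∀ i, Measurable (Y i))
    (hindep : iIndepFun Y P) {q p : ℝ} (hp : ∀ i, P.real (Y i ⁻¹' Set.Iio q) = p) {r : ℕ}
    (hr : 1 ≤ r) (hrn : r ≤ n) :
    P.real {ω | q ≤ orderStat (fun i => Y i ω) r} =
      ∑ k ∈ range r, (n.choose k : ℝ) * p ^ k * (1 - p) ^ (n - k) := by
  have hunion : {ω | q ≤ orderStat (fun i => Y i ω) r} =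
      ⋃ k ∈ range r, {ω | #{i | Y i ω ∈ Set.Iio q} = k} := by
    ext ω
    simp [le_orderStat_iff _ hr hrn]
  rw [hunion, measureReal_biUnion_finset]
  · exact sum_congr rfl fun k _ => by
      rw [hindep.measureReal_card_filter_mem_eq hY measurableSet_Iio hp, Fintype.card_fin]
  · exact fun k _ l _ hkl => Set.disjoint_left.2 fun ω h₁ h₂ => hkl (h₁.symm.trans h₂)
  · exact fun k _ => measurable_card_filter_mem hY measurableSet_Iio (measurableSet_singleton k)

theorem orderStat_confidence_upper_bound_general
    {Ω : Type*} [MeasurableSpace Ω] (P : Measure Ω) [IsProbabilityMeasure P]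
    (n : ℕ) (hn : 0 < n) (Y : Fin n → Ω → ℝ) (hYmeas : ∀ i, Measurable (Y i))
    (hindep : iIndepFun Y P)
    (ν : Measure ℝ) (hlaw : ∀ i, Measure.map (Y i) P = ν)
    (hatomless : ∀ x : ℝ, ν {x} = 0)
    (ε δ : ℝ) (hε : ε ∈ Set.Ioo (0 : ℝ) 1)
    (q : ℝ)
    (hq : q = sInf {t : ℝ | ENNReal.ofReal (1 - ε) ≤ ν (Set.Iic t)}) :
    (1 - (1 - ε) ^ n ≥ 1 - δ →
      ∃ istar : ℕ,
        IsLeast {r : ℕ | 1 ≤ r ∧ r ≤ n ∧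
          1 - δ ≤ ∑ k ∈ Finset.range r, (n.choose k : ℝ) * (1 - ε) ^ k * ε ^ (n - k)} istar ∧
        ENNReal.ofReal (1 - δ) ≤ P {ω | q ≤ orderStat (fun i => Y i ω) istar}) ∧
    (1 - (1 - ε) ^ n < 1 - δ →
      ∀ r : ℕ, 1 ≤ r → r ≤ n →
        P {ω | q ≤ orderStat (fun i => Y i ω) r} < ENNReal.ofReal (1 - δ)) := by
  obtain ⟨hε0, hε1⟩ := hε
  have : IsProbabilityMeasure ν :=
    hlaw ⟨0, hn⟩ ▸ Measure.isProbabilityMeasure_map (hYmeas _).aemeasurable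
  have : NullSingletonClass ν := ⟨hatomless⟩
  have hp : ∀ i, P.real (Y i ⁻¹' Set.Iio q) = 1 - ε := fun i => by
    rw [← map_measureReal_apply (hYmeas i) measurableSet_Iio, hlaw i, hq]
    exact measureReal_Iio_quantile ⟨by linarith, by linarith⟩
  set B : ℕ → ℝ := fun r => ∑ k ∈ range r, (n.choose k : ℝ) * (1 - ε) ^ k * ε ^ (n - k)
  have hprob : ∀ r, 1 ≤ r → r ≤ n →
      P.real {ω | q ≤ orderStat (fun i => Y i ω) r} = B r := fun r hr hrn => by
    rw [measureReal_le_orderStat hYmeas hindep hp hr hrn, sub_sub_cancel]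
  have hBn : B n = 1 - (1 - ε) ^ n := by
    simpa only [sub_sub_cancel] using sum_range_choose_mul_pow_mul_pow n (1 - ε)
  have hB_le : ∀ r ≤ n, B r ≤ B n := fun r hr =>
    sum_le_sum_of_subset_of_nonneg (range_subset_range.2 hr) fun k _ _ => mul_nonneg
      (mul_nonneg (Nat.cast_nonneg _) (pow_nonneg (by linarith) _)) (pow_nonneg hε0.le _)
  refine ⟨fun h => ?_, fun h r hr hrn => ?_⟩
  · have hex : ∃ r, 1 ≤ r ∧ r ≤ n ∧ 1 - δ ≤ B r := ⟨n, hn, le_rfl, hBn ▸ h⟩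
    obtain ⟨h₁, h₂, h₃⟩ := Nat.find_spec hex
    refine ⟨Nat.find hex, ⟨Nat.find_spec hex, fun m hm => Nat.find_min' hex hm⟩, ?_⟩
    rw [← ofReal_measureReal, hprob _ h₁ h₂]
    exact ENNReal.ofReal_le_ofReal h₃
  · rw [← ofReal_measureReal, ENNReal.ofReal_lt_ofReal_iff_of_nonneg measureReal_nonneg,
      hprob r hr hrn]
    linarith [hB_le r hrn]

/-- For i.i.d. continuous real random variables, if `1-(1-ε)^n ≥ 1-δ` then
`i* = min{r : Σ_{k=0}^{r-1} C(n,k)(1-ε)^k ε^{n-k} ≥ 1-δ}` is well-defined and `Y_(i*)` is a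
`1-δ` confidence upper bound for the `(1-ε)`-quantile; otherwise no order statistic is a
valid `1-δ` confidence upper bound. -/
theorem orderStat_confidence_upper_bound
    {Ω : Type*} [MeasurableSpace Ω] (P : Measure Ω) [IsProbabilityMeasure P]
    (n : ℕ) (hn : 0 < n) (Y : Fin n → Ω → ℝ) (hYmeas : ∀ i, Measurable (Y i))
    (hindep : iIndepFun Y P)
    (ν : Measure ℝ) (hlaw : ∀ i, Measure.map (Y i) P = ν)
    (hatomless : ∀ x : ℝ, ν {x} = 0)
    (ε δ : ℝ) (hε : ε ∈ Set.Ioo (0 : ℝ) 1) (hδ : δ ∈ Set.Ioo (0 : ℝ) 1)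
    (q : ℝ)
    (hq : q = sInf {t : ℝ | ENNReal.ofReal (1 - ε) ≤ ν (Set.Iic t)}) :
    (1 - (1 - ε) ^ n ≥ 1 - δ →
      ∃ istar : ℕ,
        IsLeast {r : ℕ | 1 ≤ r ∧ r ≤ n ∧
          1 - δ ≤ ∑ k ∈ Finset.range r, (n.choose k : ℝ) * (1 - ε) ^ k * ε ^ (n - k)} istar ∧
        ENNReal.ofReal (1 - δ) ≤ P {ω | q ≤ orderStat (fun i => Y i ω) istar}) ∧
    (1 - (1 - ε) ^ n < 1 - δ →
      ∀ r : ℕ, 1 ≤ r → r ≤ n →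
        P {ω | q ≤ orderStat (fun i => Y i ω) r} < ENNReal.ofReal (1 - δ)) :=
  orderStat_confidence_upper_bound_general P n hn Y hYmeas hindep ν hlaw hatomless ε δ hε q hq
end

section
/- Let Y₁, …, Y_n be i.i.d. real-valued random variables whose common law is atomless, let ε, δ ∈ (0,1), and let q_{1−ε} = inf{t ∈ ℝ : P(Y₁ ≤ t) ≥ 1−ε} be the (1−ε)-quantile. (a) If 1−ε^n ≥ 1−δ, then i_* = max{r ∈ {1,…,n} : Σ_{k=r}^{n} C(n,k)(1−ε)^k ε^{n−k} ≥ 1−δ} is well-defined and the i_*-th order statistic Y_(i_*) is a 1−δ confidence lower bound for q_{1−ε}, i.e., P(Y_(i_*) ≤ q_{1−ε}) ≥ 1−δ. (b) If 1−ε^n < 1−δ, then for every r ∈ {1,…,n}, P(Y_(r) ≤ q_{1−ε}) < 1−δ, i.e., no order statistic is a valid 1−δ confidence lower bound. -/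
open MeasureTheory ProbabilityTheory

/-! For atomless `ν` the quantile `q` satisfies `ν (-∞, q] = 1 - ε` exactly (the CDF is continuous,
so it attains the level `1 - ε`, and `q` is the least point where it does). Hence the events
`Y i ≤ q` are independent with probability `1 - ε`, the number of them that occur is
`Bin(n, 1 - ε)`, and since `Y_(r) ≤ q` iff at least `r` of them occur,
`P(Y_(r) ≤ q) = ∑_{k=r}^n C(n,k) (1-ε)^k ε^(n-k)`. This tail is largest at `r = 1`, where it
equals `1 - ε^n`; both parts follow. -/

open scoped ENNReal
open Finset unitInterval

theorem Monotone.apply_csInf_setOf_le_eq {α β : Type*} [ConditionallyCompleteLinearOrder α]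
    [TopologicalSpace α] [OrderTopology α] [PreconnectedSpace α] [LinearOrder β]
    [TopologicalSpace β] [OrderClosedTopology β] {f : α → β} (hmono : Monotone f)
    (hf : Continuous f) {a b : α} {p : β} (ha : f a < p) (hb : p ≤ f b) :
    f (sInf {t | p ≤ f t}) = p := by
  have hbdd : BddBelow {t | p ≤ f t} := ⟨a, fun t ht ↦ (hmono.reflect_lt (ha.trans_le ht)).le⟩
  have hmem : sInf {t | p ≤ f t} ∈ {t | p ≤ f t} :=
    (isClosed_le continuous_const hf).csInf_mem ⟨b, hb⟩ hbdd
  obtain ⟨x, hx⟩ := intermediate_value_univ a b hf ⟨ha.le, hb⟩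
  refine le_antisymm ?_ hmem
  calc f (sInf {t | p ≤ f t}) ≤ f x := hmono (csInf_le hbdd hx.ge)
    _ = p := hx

theorem Finset.sum_Icc_one_choose_mul_pow {R : Type*} [CommRing R] (a b : R) (n : ℕ) :
    ∑ k ∈ Icc 1 n, (n.choose k : R) * a ^ k * b ^ (n - k) = (a + b) ^ n - b ^ n := by
  rw [add_pow, range_eq_Ico, sum_eq_sum_Ico_succ_bot n.succ_pos, zero_add, Nat.succ_eq_add_one,
    Ico_add_one_right_eq_Icc]
  simp only [pow_zero, one_mul, Nat.sub_zero, Nat.choose_zero_right, Nat.cast_one, mul_one]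
  rw [add_sub_cancel_left]
  exact sum_congr rfl fun k _ ↦ by ring

theorem Finset.sum_Icc_choose_mul_pow_le {R : Type*} [CommRing R] [PartialOrder R]
    [IsOrderedRing R] {a b : R} (ha : 0 ≤ a) (hb : 0 ≤ b) {r : ℕ} (hr : 1 ≤ r) (n : ℕ) :
    ∑ k ∈ Icc r n, (n.choose k : R) * a ^ k * b ^ (n - k) ≤ (a + b) ^ n - b ^ n :=
  sum_Icc_one_choose_mul_pow a b n ▸ sum_le_sum_of_subset_of_nonneg (Icc_subset_Icc_left hr)
    fun k _ _ ↦ mul_nonneg (mul_nonneg (n.choose k).cast_nonneg (pow_nonneg ha k)) (pow_nonneg hb _)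

theorem Monotone.le_iff_lt_card_filter_le {α : Type*} [LinearOrder α] {n : ℕ} {g : Fin n → α}
    (hg : Monotone g) (j : Fin n) (q : α) :
    g j ≤ q ↔ (j : ℕ) < #{k | g k ≤ q} := by
  constructor
  · intro hj
    have hsub : Iic j ⊆ ({k | g k ≤ q} : Finset (Fin n)) := fun k hk ↦ by
      simpa using (hg (mem_Iic.1 hk)).trans hj
    simpa using card_le_card hsub
  · intro hj
    by_contra! hlt
    have hsub : ({k | g k ≤ q} : Finset (Fin n)) ⊆ Iio j := fun k hk ↦ by
      simpa using hg.reflect_lt ((mem_filter.1 hk).2.trans_lt hlt)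
    simpa using (card_le_card hsub).trans_lt' hj

theorem orderStat_le_iff {n : ℕ} (v : Fin n → ℝ) {r : ℕ} (h1 : 1 ≤ r) (h2 : r ≤ n) (q : ℝ) :
    orderStat v r ≤ q ↔ r ≤ {i | v i ≤ q}.ncard := by
  have hr : r - 1 < n := by omega
  have hcard : #{k | v (Tuple.sort v k) ≤ q} = {i | v i ≤ q}.ncard := by
    rw [Set.ncard_eq_toFinset_card', Set.toFinset_ofPred]
    exact card_equiv (Tuple.sort v) (by simp)
  rw [orderStat, dif_pos hr, ← Function.comp_apply (f := v),
    (Tuple.monotone_sort v).le_iff_lt_card_filter_le]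
  simp only [Function.comp_apply, hcard]
  omega

namespace ProbabilityTheory

theorem continuous_cdf (μ : Measure ℝ) [IsProbabilityMeasure μ] [NullSingletonClass μ] :
    Continuous (cdf μ) := by
  refine continuous_iff_continuousAt.2 fun x ↦ ?_
  have hjump := (cdf μ).measure_singleton x
  rw [measure_cdf, measure_singleton, eq_comm, ENNReal.ofReal_eq_zero, sub_nonpos] at hjump
  rw [(monotone_cdf μ).continuousAt_iff_leftLim_eq_rightLim, StieltjesFunction.rightLim_eq]
  exact le_antisymm ((monotone_cdf μ).leftLim_le le_rfl) hjump

theorem measure_Iic_sInf_setOf_le_measure_Iic (μ : Measure ℝ) [IsProbabilityMeasure μ]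
    [NullSingletonClass μ] {p : ℝ} (hp : p ∈ Set.Ioo 0 1) :
    μ (Set.Iic (sInf {t | ENNReal.ofReal p ≤ μ (Set.Iic t)})) = ENNReal.ofReal p := by
  have hset : {t | ENNReal.ofReal p ≤ μ (Set.Iic t)} = {t | p ≤ cdf μ t} := by
    ext t
    rw [Set.mem_ofPred_eq, ← ofReal_cdf, ENNReal.ofReal_le_ofReal_iff (cdf_nonneg μ t)]
    rfl
  obtain ⟨a, ha⟩ := ((tendsto_cdf_atBot μ).eventually (eventually_lt_nhds hp.1)).exists
  obtain ⟨b, hb⟩ := ((tendsto_cdf_atTop μ).eventually (eventually_ge_nhds hp.2)).exists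
  rw [hset, ← ofReal_cdf, (monotone_cdf μ).apply_csInf_setOf_le_eq (continuous_cdf μ) ha hb]

theorem map_ncard_setBernoulli {ι : Type*} [Countable ι] {u : Set ι} (hu : u.Finite) (p : I) :
    setBer(u, p).map Set.ncard = Bin(u.ncard, p) :=
  Measure.ext_of_singleton fun k ↦ by
    rw [map_ncard_setBernoulli_singleton hu, binomial_singleton]

theorem binomial_Ici (n r : ℕ) (p : I) :
    Bin(n, p) (Set.Ici r) =
      ENNReal.ofReal (∑ k ∈ Icc r n, (n.choose k : ℝ) * p ^ k * (1 - p) ^ (n - k)) := by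
  rw [ENNReal.ofReal_sum_of_nonneg fun _ _ ↦ binomial_nonneg, binomial_eq_sum_dirac,
    Measure.coe_finsetSum, Finset.sum_apply]
  simp only [Measure.smul_apply, Measure.dirac_apply' _ measurableSet_Ici, smul_eq_mul,
    Set.indicator_apply, Set.mem_Ici, Pi.one_apply, mul_ite, mul_one, mul_zero]
  rw [← Finset.sum_filter]
  congr 1
  ext k
  simp [and_comm]

theorem isSetBernoulli_setOf_mem {Ω ι β : Type*} [MeasurableSpace Ω] [MeasurableSpace β]
    [Fintype ι] {P : Measure Ω} [IsProbabilityMeasure P] {Y : ι → Ω → β}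
    (hY : ∀ i, Measurable (Y i)) (hindep : iIndepFun Y P) {A : Set β} (hA : MeasurableSet A)
    {p : I} (hp : ∀ i, P (Y i ⁻¹' A) = toNNReal p) :
    IsSetBernoulli (fun ω ↦ {i | Y i ω ∈ A}) Set.univ p P := by
  classical
  have hmeas : Measurable fun ω ↦ {i | Y i ω ∈ A} :=
    measurable_set_iff.2 fun i ↦ measurableSet_setOfPred.1 (hY i hA)
  have hcompl : ∀ i, P (Y i ⁻¹' Aᶜ) = toNNReal (σ p) := fun i ↦ by
    rw [Set.preimage_compl, prob_compl_eq_one_sub (hY i hA), hp i]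
    refine ENNReal.sub_eq_of_eq_add_rev ENNReal.coe_ne_top ?_
    rw [← ENNReal.coe_add, toNNReal_add_toNNReal_symm, ENNReal.coe_one]
  refine ⟨hmeas.aemeasurable, Measure.ext_of_singleton fun s ↦ ?_⟩
  have hfiber : (fun ω ↦ {i | Y i ω ∈ A}) ⁻¹' {s} =
      ⋂ i ∈ (Finset.univ : Finset ι), Y i ⁻¹' (if i ∈ s then A else Aᶜ) := by
    ext ω
    simp only [Set.mem_preimage, Set.mem_singleton_iff, Set.ext_iff, Set.mem_iInter]
    refine forall_congr' fun i ↦ ?_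
    by_cases hi : i ∈ s <;> simp [hi]
  rw [Measure.map_apply hmeas (measurableSet_singleton s), hfiber,
    iIndepFun_iff_measure_inter_preimage_eq_mul.1 hindep _ fun i _ ↦ ?_,
    setBernoulli_singleton p (Set.subset_univ s) Set.finite_univ]
  · rw [Finset.prod_congr rfl fun i _ ↦ (apply_ite (fun B ↦ P (Y i ⁻¹' B)) _ _ _).trans
      (by rw [hp i, hcompl i]), Finset.prod_ite, Finset.prod_const, Finset.prod_const,
      ← Set.compl_eq_univ_sdiff, Set.ncard_eq_toFinset_card', Set.ncard_eq_toFinset_card']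
    congr 3 <;> ext <;> simp
  · split_ifs
    exacts [hA, hA.compl]

end ProbabilityTheory

theorem measure_orderStat_le_eq_binomial {Ω : Type*} [MeasurableSpace Ω] {P : Measure Ω}
    [IsProbabilityMeasure P] {n : ℕ} {Y : Fin n → Ω → ℝ} (hY : ∀ i, Measurable (Y i))
    (hindep : iIndepFun Y P) {q : ℝ} {p : I} (hp : ∀ i, P (Y i ⁻¹' Set.Iic q) = toNNReal p)
    {r : ℕ} (hr1 : 1 ≤ r) (hrn : r ≤ n) :
    P {ω | orderStat (fun i ↦ Y i ω) r ≤ q} = Bin(n, p) (Set.Ici r) := by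
  have hcount : HasLaw (fun ω ↦ {i | Y i ω ∈ Set.Iic q}.ncard) Bin(n, p) P := by
    have hncard : HasLaw Set.ncard Bin(n, p) setBer((Set.univ : Set (Fin n)), p) := by
      refine ⟨measurable_ncard.aemeasurable, ?_⟩
      simp [map_ncard_setBernoulli Set.finite_univ]
    exact hncard.comp (isSetBernoulli_setOf_mem hY hindep measurableSet_Iic hp)
  simp_rw [orderStat_le_iff _ hr1 hrn]
  exact hcount.measure_eq measurableSet_Ici

/-- For i.i.d. continuous real random variables, if `1-ε^n ≥ 1-δ` then
`i_* = max{r : Σ_{k=r}^{n} C(n,k)(1-ε)^k ε^{n-k} ≥ 1-δ}` is well-defined and `Y_(i_*)` is a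
`1-δ` confidence lower bound for the `(1-ε)`-quantile; otherwise no order statistic is a
valid `1-δ` confidence lower bound. -/
theorem orderStat_confidence_lower_bound
    {Ω : Type*} [MeasurableSpace Ω] (P : Measure Ω) [IsProbabilityMeasure P]
    (n : ℕ) (hn : 0 < n) (Y : Fin n → Ω → ℝ) (hYmeas : ∀ i, Measurable (Y i))
    (hindep : iIndepFun Y P)
    (ν : Measure ℝ) (hlaw : ∀ i, Measure.map (Y i) P = ν)
    (hatomless : ∀ x : ℝ, ν {x} = 0)
    (ε δ : ℝ) (hε : ε ∈ Set.Ioo (0 : ℝ) 1) (hδ : δ ∈ Set.Ioo (0 : ℝ) 1)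
    (q : ℝ)
    (hq : q = sInf {t : ℝ | ENNReal.ofReal (1 - ε) ≤ ν (Set.Iic t)}) :
    (1 - ε ^ n ≥ 1 - δ →
      ∃ istar : ℕ,
        IsGreatest {r : ℕ | 1 ≤ r ∧ r ≤ n ∧
          1 - δ ≤ ∑ k ∈ Finset.Icc r n, (n.choose k : ℝ) * (1 - ε) ^ k * ε ^ (n - k)} istar ∧
        ENNReal.ofReal (1 - δ) ≤ P {ω | orderStat (fun i => Y i ω) istar ≤ q}) ∧
    (1 - ε ^ n < 1 - δ →
      ∀ r : ℕ, 1 ≤ r → r ≤ n →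
        P {ω | orderStat (fun i => Y i ω) r ≤ q} < ENNReal.ofReal (1 - δ)) := by
  obtain ⟨hε0, hε1⟩ := hε
  have : IsProbabilityMeasure ν :=
    hlaw ⟨0, hn⟩ ▸ Measure.isProbabilityMeasure_map (hYmeas _).aemeasurable
  have : NullSingletonClass ν := ⟨hatomless⟩
  let p : I := ⟨1 - ε, by linarith, by linarith⟩
  have hp : ∀ i, P (Y i ⁻¹' Set.Iic q) = toNNReal p := fun i ↦ by
    rw [← Measure.map_apply (hYmeas i) measurableSet_Iic, hlaw i, hq,
      measure_Iic_sInf_setOf_le_measure_Iic ν ⟨by linarith, by linarith⟩]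
    exact ENNReal.ofReal_coe_nnreal (p := toNNReal p)
  have hprob : ∀ r, 1 ≤ r → r ≤ n → P {ω | orderStat (fun i => Y i ω) r ≤ q} =
      ENNReal.ofReal (∑ k ∈ Icc r n, (n.choose k : ℝ) * (1 - ε) ^ k * ε ^ (n - k)) :=
    fun r hr1 hrn ↦ by
      rw [measure_orderStat_le_eq_binomial hYmeas hindep hp hr1 hrn, binomial_Ici, sub_sub_cancel]
  have htotal : ∑ k ∈ Icc 1 n, (n.choose k : ℝ) * (1 - ε) ^ k * ε ^ (n - k) = 1 - ε ^ n := by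
    rw [sum_Icc_one_choose_mul_pow, sub_add_cancel, one_pow]
  refine ⟨fun hconf ↦ ?_, fun hconf r hr1 hrn ↦ ?_⟩
  · obtain ⟨istar, hstar⟩ := BddAbove.exists_isGreatest_of_nonempty
      (S := {r : ℕ | 1 ≤ r ∧ r ≤ n ∧
        1 - δ ≤ ∑ k ∈ Icc r n, (n.choose k : ℝ) * (1 - ε) ^ k * ε ^ (n - k)})
      ⟨n, fun r hr ↦ hr.2.1⟩ ⟨1, le_rfl, hn, htotal ▸ hconf⟩
    exact ⟨istar, hstar, hprob _ hstar.1.1 hstar.1.2.1 ▸ ENNReal.ofReal_le_ofReal hstar.1.2.2⟩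
  · rw [hprob r hr1 hrn, ENNReal.ofReal_lt_ofReal_iff (by linarith [hδ.2])]
    calc _ ≤ (1 - ε + ε) ^ n - ε ^ n := sum_Icc_choose_mul_pow_le (by linarith) hε0.le hr1 n
      _ < 1 - δ := by rwa [sub_add_cancel, one_pow]
end

section
/- Let ε, δ ∈ (0,1) and let n₂ be a positive integer with (1−ε)^{n₂} ≤ δ. Let (S, 𝒮) be a measurable space and, on a common probability space, let D₁ be an S-valued random element and let ξ₁², …, ξ_{n₂}² be i.i.d. ℝ^m-valued random vectors with common law μ, with D₁ independent of (ξ₁², …, ξ_{n₂}²). Let t : S × ℝ^m → ℝ be jointly measurable such that for every s ∈ S the pushforward of μ under z ↦ t(s,z) is atomless. Define i* = min{r ∈ {1,…,n₂} : Σ_{k=0}^{r−1} C(n₂,k)(1−ε)^k ε^{n₂−k} ≥ 1−δ} and let T be the i*-th order statistic of the values t(D₁,ξ₁²), …, t(D₁,ξ_{n₂}²). Then the random uncertainty set U = {z ∈ ℝ^m : t(D₁,z) ≤ T} satisfies the coverage guarantee P( μ{z ∈ ℝ^m : t(D₁,z) ≤ T} ≥ 1−ε ) ≥ 1−δ. 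-/
/-!
Condition on `D₁ = s`. The scores `t (s, ξᵢ²)` are then i.i.d. with an atomless law, so the
intermediate value theorem applied to their CDF yields a threshold `q` with
`μ {t (s, ·) < q} = μ {t (s, ·) ≤ q} = 1 - ε`. If fewer than `i*` scores lie below `q`, the
`i*`-th order statistic is at least `q`, and then `{t (s, ·) ≤ T}` has content at least `1 - ε`.
The number of scores below `q` is binomial with parameters `n₂` and `1 - ε`, so this happens with
probability `∑_{k < i*} C(n₂, k) (1 - ε)^k ε^(n₂ - k) ≥ 1 - δ`. Integrating over the law of
`D₁`, which is independent of the Phase 2 data, gives the claim.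
-/

open MeasureTheory ProbabilityTheory

open Finset

section Binomial

variable {ι α : Type*} [Fintype ι] {A : Set α} [DecidablePred (· ∈ A)]

lemma setOf_card_filter_mem_eq_biUnion (k : ℕ) :
    {x : ι → α | #{i | x i ∈ A} = k} =
      ⋃ T ∈ powersetCard k (univ : Finset ι), {x | ({i | x i ∈ A} : Finset ι) = T} := by
  ext x
  simp

lemma setOf_card_filter_mem_lt_eq_biUnion (r : ℕ) :
    {x : ι → α | #{i | x i ∈ A} < r} = ⋃ k ∈ range r, {x | #{i | x i ∈ A} = k} := by
  ext x
  simp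

variable [DecidableEq ι]

lemma setOf_filter_mem_eq_pi (T : Finset ι) :
    {x : ι → α | ({i | x i ∈ A} : Finset ι) = T} =
      Set.univ.pi fun i => if i ∈ T then A else Aᶜ := by
  ext x
  simp only [Set.mem_ofPred_eq, Set.mem_univ_pi, Finset.ext_iff, mem_filter,
    mem_univ, true_and]
  refine forall_congr' fun i => ?_
  split_ifs with hi <;> simp [hi]

variable [MeasurableSpace α]

lemma measurableSet_setOf_filter_mem_eq (hA : MeasurableSet A) (T : Finset ι) :
    MeasurableSet {x : ι → α | ({i | x i ∈ A} : Finset ι) = T} := by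
  rw [setOf_filter_mem_eq_pi]
  exact .univ_pi fun i => by split_ifs; exacts [hA, hA.compl]

lemma measurableSet_setOf_card_filter_mem_eq (hA : MeasurableSet A) (k : ℕ) :
    MeasurableSet {x : ι → α | #{i | x i ∈ A} = k} := by
  rw [setOf_card_filter_mem_eq_biUnion]
  exact measurableSet_biUnion _ fun T _ => measurableSet_setOf_filter_mem_eq hA T

lemma measurableSet_setOf_card_filter_mem_lt (hA : MeasurableSet A) (r : ℕ) :
    MeasurableSet {x : ι → α | #{i | x i ∈ A} < r} := by
  rw [setOf_card_filter_mem_lt_eq_biUnion]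
  exact measurableSet_biUnion _ fun k _ => measurableSet_setOf_card_filter_mem_eq hA k

variable (μ : Measure α) [IsProbabilityMeasure μ]

lemma measure_pi_setOf_filter_mem_eq (hA : MeasurableSet A) (T : Finset ι) :
    Measure.pi (fun _ : ι => μ) {x | ({i | x i ∈ A} : Finset ι) = T} =
      μ A ^ #T * (1 - μ A) ^ (Fintype.card ι - #T) := by
  rw [setOf_filter_mem_eq_pi, Measure.pi_pi]
  simp only [apply_ite μ, prob_compl_eq_one_sub hA, prod_ite, prod_const]
  simp [filter_not, card_univ_sdiff]

lemma measure_pi_setOf_card_filter_mem_eq (hA : MeasurableSet A) (k : ℕ) :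
    Measure.pi (fun _ : ι => μ) {x | #{i | x i ∈ A} = k} =
      (Fintype.card ι).choose k * μ A ^ k * (1 - μ A) ^ (Fintype.card ι - k) := by
  rw [setOf_card_filter_mem_eq_biUnion, measure_biUnion_finset]
  · rw [sum_congr rfl fun T hT => by
      rw [measure_pi_setOf_filter_mem_eq μ hA, (mem_powersetCard.1 hT).2]]
    rw [sum_const, card_powersetCard, card_univ, nsmul_eq_mul, mul_assoc]
  · intro T₁ _ T₂ _ hne
    exact Set.disjoint_left.2 fun x h₁ h₂ => hne (h₁.symm.trans h₂)
  · exact fun T _ => measurableSet_setOf_filter_mem_eq hA T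

lemma measure_pi_setOf_card_filter_mem_lt (hA : MeasurableSet A) (r : ℕ) :
    Measure.pi (fun _ : ι => μ) {x | #{i | x i ∈ A} < r} =
      ∑ k ∈ range r,
        (Fintype.card ι).choose k * μ A ^ k * (1 - μ A) ^ (Fintype.card ι - k) := by
  rw [setOf_card_filter_mem_lt_eq_biUnion, measure_biUnion_finset]
  · exact sum_congr rfl fun k _ => measure_pi_setOf_card_filter_mem_eq μ hA k
  · intro k₁ _ k₂ _ hne
    exact Set.disjoint_left.2 fun x h₁ h₂ => hne (h₁.symm.trans h₂)
  · exact fun k _ => measurableSet_setOf_card_filter_mem_eq hA k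

end Binomial

lemma Monotone.card_filter_lt_le_iff {β : Type*} [LinearOrder β] {n : ℕ} {w : Fin n → β}
    (hw : Monotone w) (j : Fin n) (c : β) : #{k | w k < c} ≤ j ↔ c ≤ w j := by
  constructor
  · intro hcard
    by_contra! hj
    have hsub : Iic j ⊆ ({k | w k < c} : Finset (Fin n)) := fun k hk => by
      simpa using (hw (mem_Iic.1 hk)).trans_lt hj
    have := card_le_card hsub
    rw [Fin.card_Iic] at this
    omega
  · intro hj
    have hsub : ({k | w k < c} : Finset (Fin n)) ⊆ Iio j := fun k hk => by
      simp only [mem_filter, mem_univ, true_and] at hk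
      exact mem_Iio.2 (lt_of_not_ge fun hjk => (hw hjk).not_gt (hk.trans_le hj))
    simpa using card_le_card hsub

lemma card_filter_lt_lt_iff_le_orderStat {n : ℕ} (v : Fin n → ℝ) {r : ℕ} (hr : 1 ≤ r)
    (hrn : r ≤ n) (c : ℝ) : #{i | v i < c} < r ↔ c ≤ orderStat v r := by
  have h : r - 1 < n := by omega
  have hperm : #{i | v i < c} = #{k | v (Tuple.sort v k) < c} := by
    simp only [card_filter]
    exact (Equiv.sum_comp (Tuple.sort v) (fun i => if v i < c then 1 else 0)).symm
  have hsorted := (Tuple.monotone_sort v).card_filter_lt_le_iff ⟨r - 1, h⟩ c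
  simp only [Function.comp_apply] at hsorted
  rw [orderStat, dif_pos h, hperm, ← hsorted]
  omega

lemma measurable_orderStat {n r : ℕ} (hr : 1 ≤ r) (hrn : r ≤ n) :
    Measurable fun v : Fin n → ℝ => orderStat v r := by
  refine measurable_of_Ici fun c => ?_
  have : (fun v : Fin n → ℝ => orderStat v r) ⁻¹' Set.Ici c = {v | #{i | v i < c} < r} := by
    ext v; simp [card_filter_lt_lt_iff_le_orderStat v hr hrn]
  rw [this]
  exact measurableSet_setOf_card_filter_mem_lt measurableSet_Iio r

section Quantile

variable (ν : Measure ℝ) [IsProbabilityMeasure ν]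

lemma continuous_cdf_of_measure_singleton (hν : ∀ x, ν {x} = 0) : Continuous (cdf ν) := by
  refine continuous_iff_continuousAt.2 fun x => ?_
  have hjump := (cdf ν).measure_singleton x
  rw [measure_cdf, hν, eq_comm, ENNReal.ofReal_eq_zero, sub_nonpos] at hjump
  have hleft : Function.leftLim (cdf ν) x = cdf ν x :=
    le_antisymm ((monotone_cdf ν).leftLim_le le_rfl) hjump
  rw [(monotone_cdf ν).continuousAt_iff_leftLim_eq_rightLim, hleft, (cdf ν).rightLim_eq]

lemma exists_measure_Iic_eq_and_Iio_eq (hν : ∀ x, ν {x} = 0) {p : ℝ} (hp : p ∈ Set.Ioo 0 1) :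
    ∃ q, ν (Set.Iic q) = ENNReal.ofReal p ∧ ν (Set.Iio q) = ENNReal.ofReal p := by
  obtain ⟨a, ha⟩ := ((tendsto_cdf_atBot ν).eventually (gt_mem_nhds hp.1)).exists
  obtain ⟨b, hb⟩ := ((tendsto_cdf_atTop ν).eventually (lt_mem_nhds hp.2)).exists
  obtain ⟨q, hq⟩ := intermediate_value_univ a b (continuous_cdf_of_measure_singleton ν hν)
    ⟨ha.le, hb.le⟩
  have hIic : ν (Set.Iic q) = ENNReal.ofReal p := by rw [← ofReal_cdf, hq]
  exact ⟨q, hIic, by rw [measure_congr (Iio_ae_eq_Iic' (hν q)), hIic]⟩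

end Quantile

lemma ofReal_sum_binomial_le_measure_pi_coverage {α : Type*} [MeasurableSpace α]
    (μ : Measure α) [IsProbabilityMeasure μ] {f : α → ℝ} (hf : Measurable f)
    (hatom : ∀ x, μ.map f {x} = 0) {n r : ℕ} (hr : 1 ≤ r) (hrn : r ≤ n) {ε : ℝ}
    (hε : ε ∈ Set.Ioo 0 1) :
    ENNReal.ofReal (∑ k ∈ range r, (n.choose k : ℝ) * (1 - ε) ^ k * ε ^ (n - k)) ≤
      Measure.pi (fun _ : Fin n => μ)
        {x | ENNReal.ofReal (1 - ε) ≤ μ {z | f z ≤ orderStat (fun i => f (x i)) r}} := by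
  classical
  have := Measure.isProbabilityMeasure_map (μ := μ) hf.aemeasurable
  obtain ⟨q, hIic, hIio⟩ := exists_measure_Iic_eq_and_Iio_eq (μ.map f) hatom
    (p := 1 - ε) ⟨by linarith [hε.2], by linarith [hε.1]⟩
  rw [Measure.map_apply hf measurableSet_Iic] at hIic
  rw [Measure.map_apply hf measurableSet_Iio] at hIio
  have hcompl : 1 - μ (f ⁻¹' Set.Iio q) = ENNReal.ofReal ε := by
    rw [hIio, ← ENNReal.ofReal_one, ← ENNReal.ofReal_sub _ (by linarith [hε.2]), sub_sub_cancel]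
  calc ENNReal.ofReal (∑ k ∈ range r, (n.choose k : ℝ) * (1 - ε) ^ k * ε ^ (n - k))
      = ∑ k ∈ range r,
          (n.choose k : ENNReal) * ENNReal.ofReal (1 - ε) ^ k * ENNReal.ofReal ε ^ (n - k) := by
        have h1ε : 0 ≤ 1 - ε := by linarith [hε.2]
        rw [ENNReal.ofReal_sum_of_nonneg fun k _ => by have := hε.1; positivity]
        refine sum_congr rfl fun k _ => ?_
        rw [ENNReal.ofReal_mul (by positivity), ENNReal.ofReal_mul (by positivity),
          ENNReal.ofReal_pow h1ε, ENNReal.ofReal_pow hε.1.le, ENNReal.ofReal_natCast]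
    _ = Measure.pi (fun _ : Fin n => μ) {x | #{i | x i ∈ f ⁻¹' Set.Iio q} < r} := by
        rw [measure_pi_setOf_card_filter_mem_lt μ (hf measurableSet_Iio), hcompl, hIio,
          Fintype.card_fin]
    _ ≤ _ := measure_mono fun x hx => ?_
  have hq : q ≤ orderStat (fun i => f (x i)) r :=
    (card_filter_lt_lt_iff_le_orderStat _ hr hrn q).1 (by simpa using hx)
  exact hIic ▸ measure_mono fun z hz => le_trans hz hq

lemma measurable_measure_setOf_le_orderStat {S α : Type*} [MeasurableSpace S] [MeasurableSpace α]
    (μ : Measure α) [SFinite μ] {f : S × α → ℝ} (hf : Measurable f) {n r : ℕ} (hr : 1 ≤ r)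
    (hrn : r ≤ n) :
    Measurable fun p : S × (Fin n → α) =>
      μ {z | f (p.1, z) ≤ orderStat (fun i => f (p.1, p.2 i)) r} := by
  have hcontent : Measurable fun q : S × ℝ => μ {z | f (q.1, z) ≤ q.2} :=
    measurable_measure_prodMk_left
      (measurableSet_le (hf.comp (measurable_fst.fst.prodMk measurable_snd)) measurable_fst.snd)
  have hsample : Measurable fun p : S × (Fin n → α) => fun i => f (p.1, p.2 i) :=
    measurable_pi_lambda _ fun i =>
      hf.comp (measurable_fst.prodMk ((measurable_pi_apply i).comp measurable_snd))
  exact hcontent.comp (measurable_fst.prodMk ((measurable_orderStat hr hrn).comp hsample))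

lemma map_prodMk_eq_prod_pi {Ω S β ι : Type*} [MeasurableSpace Ω] [MeasurableSpace S]
    [MeasurableSpace β] [Fintype ι] {P : Measure Ω} [IsFiniteMeasure P] {D : Ω → S}
    (hD : Measurable D) {X : ι → Ω → β} (hX : ∀ i, Measurable (X i)) (hiid : iIndepFun X P)
    {μ : Measure β} (hlaw : ∀ i, P.map (X i) = μ) (hindep : IndepFun D (fun ω i => X i ω) P) :
    P.map (fun ω => (D ω, fun i => X i ω)) = (P.map D).prod (Measure.pi fun _ : ι => μ) := by
  rw [(indepFun_iff_map_prod_eq_prod_map_map hD.aemeasurable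
    (measurable_pi_lambda _ hX).aemeasurable).1 hindep,
    hiid.map_fun_eq_pi_map fun i => (hX i).aemeasurable]
  simp_rw [hlaw]

theorem learning_based_RO_coverage_general
    {Ω S : Type*} [MeasurableSpace Ω] [MeasurableSpace S]
    (P : Measure Ω) [IsProbabilityMeasure P]
    (m n₂ : ℕ)
    (ε δ : ℝ) (hε : ε ∈ Set.Ioo (0 : ℝ) 1)
    (D₁ : Ω → S) (hD₁ : Measurable D₁)
    (ξ : Fin n₂ → Ω → (Fin m → ℝ)) (hξmeas : ∀ i, Measurable (ξ i))
    (hiid : iIndepFun ξ P)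
    (μ : Measure (Fin m → ℝ)) [IsProbabilityMeasure μ]
    (hlaw : ∀ i, Measure.map (ξ i) P = μ)
    (hindep : IndepFun D₁ (fun ω => fun i => ξ i ω) P)
    (t : S × (Fin m → ℝ) → ℝ) (ht : Measurable t)
    (hatomless : ∀ s : S, ∀ x : ℝ, Measure.map (fun z => t (s, z)) μ {x} = 0)
    (istar : ℕ)
    (histar : IsLeast {r : ℕ | 1 ≤ r ∧ r ≤ n₂ ∧
      1 - δ ≤ ∑ k ∈ Finset.range r, (n₂.choose k : ℝ) * (1 - ε) ^ k * ε ^ (n₂ - k)} istar) :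
    ENNReal.ofReal (1 - δ) ≤
      P {ω | ENNReal.ofReal (1 - ε) ≤
        μ {z | t (D₁ ω, z) ≤ orderStat (fun i => t (D₁ ω, ξ i ω)) istar}} := by
  obtain ⟨⟨hr, hrn, hsum⟩, -⟩ := histar
  let covered : Set (S × (Fin n₂ → Fin m → ℝ)) :=
    {p | ENNReal.ofReal (1 - ε) ≤ μ {z | t (p.1, z) ≤ orderStat (fun i => t (p.1, p.2 i)) istar}}
  have hcovered : MeasurableSet covered :=
    measurableSet_le measurable_const (measurable_measure_setOf_le_orderStat μ ht hr hrn)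
  have hdata : Measurable fun ω => (D₁ ω, fun i => ξ i ω) :=
    hD₁.prodMk (measurable_pi_lambda _ hξmeas)
  have := Measure.isProbabilityMeasure_map (μ := P) hD₁.aemeasurable
  calc ENNReal.ofReal (1 - δ) = ∫⁻ _, ENNReal.ofReal (1 - δ) ∂P.map D₁ := by simp
    _ ≤ ∫⁻ s, Measure.pi (fun _ => μ) (Prod.mk s ⁻¹' covered) ∂P.map D₁ :=
        lintegral_mono fun s => (ENNReal.ofReal_le_ofReal hsum).trans
          (ofReal_sum_binomial_le_measure_pi_coverage μ (ht.comp measurable_prodMk_left)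
            (hatomless s) hr hrn hε)
    _ = P.map (fun ω => (D₁ ω, fun i => ξ i ω)) covered := by
        rw [map_prodMk_eq_prod_pi hD₁ hξmeas hiid hlaw hindep, Measure.prod_apply hcovered]
    _ = _ := Measure.map_apply hdata hcovered

/-- basic statistical guarantee of learning-based RO: with Phase 1 data `D₁`
independent of the i.i.d. Phase 2 data `ξ₁²,…,ξ_{n₂}²`, and the size calibrated as the
`i*`-th order statistic of the transformed Phase 2 data, the uncertainty set
`{z : t(D₁,z) ≤ T}` has `μ`-content at least `1-ε` with probability at least `1-δ`. -/
theorem learning_based_RO_coverage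
    {Ω S : Type*} [MeasurableSpace Ω] [MeasurableSpace S]
    (P : Measure Ω) [IsProbabilityMeasure P]
    (m n₂ : ℕ) (hn₂ : 0 < n₂)
    (ε δ : ℝ) (hε : ε ∈ Set.Ioo (0 : ℝ) 1) (hδ : δ ∈ Set.Ioo (0 : ℝ) 1)
    (hsize : (1 - ε) ^ n₂ ≤ δ)
    (D₁ : Ω → S) (hD₁ : Measurable D₁)
    (ξ : Fin n₂ → Ω → (Fin m → ℝ)) (hξmeas : ∀ i, Measurable (ξ i))
    (hiid : iIndepFun ξ P)
    (μ : Measure (Fin m → ℝ)) [IsProbabilityMeasure μ]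
    (hlaw : ∀ i, Measure.map (ξ i) P = μ)
    (hindep : IndepFun D₁ (fun ω => fun i => ξ i ω) P)
    (t : S × (Fin m → ℝ) → ℝ) (ht : Measurable t)
    (hatomless : ∀ s : S, ∀ x : ℝ, Measure.map (fun z => t (s, z)) μ {x} = 0)
    (istar : ℕ)
    (histar : IsLeast {r : ℕ | 1 ≤ r ∧ r ≤ n₂ ∧
      1 - δ ≤ ∑ k ∈ Finset.range r, (n₂.choose k : ℝ) * (1 - ε) ^ k * ε ^ (n₂ - k)} istar) :
    ENNReal.ofReal (1 - δ) ≤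
      P {ω | ENNReal.ofReal (1 - ε) ≤
        μ {z | t (D₁ ω, z) ≤ orderStat (fun i => t (D₁ ω, ξ i ω)) istar}} :=
  learning_based_RO_coverage_general P m n₂ ε δ hε D₁ hD₁ ξ hξmeas hiid μ hlaw hindep t ht hatomless
    istar histar
end

section
/- Let D ∈ ℝ^{r×d}, e ∈ ℝ^r, x ∈ ℝ^d, and b ∈ ℝ, and suppose the polytope U = {a ∈ ℝ^d : Da ≤ e} (componentwise inequality) is nonempty. Then the robust linear constraint 'a·x ≤ b for every a ∈ U' holds if and only if there exists p ∈ ℝ^r with p ≥ 0 (componentwise), Dᵀp = x, and p·e ≤ b. -/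
/-!
Homogenizing, the robust constraint says `y ⬝ᵥ x ≤ τ * b` whenever `τ ≥ 0` and `D y ≤ τ e`:
for `τ > 0` rescale `y` into `U`, and for `τ = 0` the vector `y` is a recession direction of the
nonempty polyhedron `U`, along which `a ⬝ᵥ x` would be unbounded unless `y ⬝ᵥ x ≤ 0`. By Farkas'
lemma this is exactly the statement that `(x, b)` lies in the cone generated by the vectors
`(Dᵢ, eᵢ)` and `(0, 1)`, i.e. that a certificate `p` exists. Farkas' lemma is Hahn–Banach
separation from a finitely generated cone, which is closed because, by the conic Carathéodory
theorem, it is a finite union of images of orthants under injective linear maps.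
-/

open Matrix

section ConicHull

variable {ι E : Type*} [AddCommGroup E] [Module ℝ E]

def conicHull (v : ι → E) (s : Finset ι) : Set E :=
  {x | ∃ q : ι → ℝ, (∀ i ∈ s, 0 ≤ q i) ∧ ∑ i ∈ s, q i • v i = x}

variable {v : ι → E} {s t : Finset ι} {x : E}

lemma mem_conicHull_of_mem {i : ι} (hi : i ∈ s) : v i ∈ conicHull v s := by
  classical
  refine ⟨Pi.single i 1, fun j _ => ?_, ?_⟩
  · by_cases hj : j = i <;> simp [hj]
  · simp [Pi.single_apply, ite_smul, hi]

lemma zero_mem_conicHull : (0 : E) ∈ conicHull v s := ⟨0, fun _ _ => le_rfl, by simp⟩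

lemma convex_conicHull : Convex ℝ (conicHull v s) := by
  rintro _ ⟨p, hp, rfl⟩ _ ⟨q, hq, rfl⟩ a b ha hb -
  refine ⟨a • p + b • q, fun i hi => ?_, ?_⟩
  · have := hp i hi; have := hq i hi
    simp only [Pi.add_apply, Pi.smul_apply, smul_eq_mul]
    positivity
  · simp only [Pi.add_apply, Pi.smul_apply, smul_eq_mul, add_smul, mul_smul,
      Finset.sum_add_distrib, Finset.smul_sum]

lemma smul_mem_conicHull {c : ℝ} (hc : 0 ≤ c) (hx : x ∈ conicHull v s) :
    c • x ∈ conicHull v s := by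
  obtain ⟨q, hq, rfl⟩ := hx
  exact ⟨c • q, fun i hi => mul_nonneg hc (hq i hi), by simp [Finset.smul_sum, mul_smul]⟩

lemma conicHull_mono (hst : s ⊆ t) : conicHull v s ⊆ conicHull v t := by
  classical
  rintro _ ⟨q, hq, rfl⟩
  refine ⟨fun i => if i ∈ s then q i else 0, fun i _ => ?_, ?_⟩
  · by_cases hi : i ∈ s <;> simp [hi, hq]
  · rw [← Finset.sum_subset hst (fun i _ hi => by simp [hi])]
    exact Finset.sum_congr rfl fun i hi => by simp [hi]

/-- Conic Carathéodory: move along a linear dependence among the generators until a coefficient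
vanishes. -/
lemma exists_mem_conicHull_erase_of_not_linearIndepOn [DecidableEq ι] (hx : x ∈ conicHull v s)
    (hs : ¬LinearIndepOn ℝ v (s : Set ι)) : ∃ i ∈ s, x ∈ conicHull v (s.erase i) := by
  obtain ⟨q, hq, rfl⟩ := hx
  obtain ⟨g, hg, hpos⟩ : ∃ g : ι → ℝ, ∑ i ∈ s, g i • v i = 0 ∧ ∃ i ∈ s, 0 < g i := by
    simp only [linearIndepOn_finset_iff, not_forall] at hs
    obtain ⟨g, hg, j, hj, hgj⟩ := hs
    rcases lt_or_gt_of_ne hgj with hneg | hpos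
    · exact ⟨-g, by simp only [Pi.neg_apply, neg_smul, Finset.sum_neg_distrib, hg, neg_zero],
        j, hj, neg_pos.2 hneg⟩
    · exact ⟨g, hg, j, hj, hpos⟩
  obtain ⟨i₀, hi₀P, hmin⟩ := (s.filter (fun i => 0 < g i)).exists_min_image (fun i => q i / g i)
    (let ⟨j, hj, hgj⟩ := hpos; ⟨j, Finset.mem_filter.2 ⟨hj, hgj⟩⟩)
  obtain ⟨hi₀, hgi₀⟩ := Finset.mem_filter.1 hi₀P
  set c := q i₀ / g i₀
  have hc : 0 ≤ c := div_nonneg (hq i₀ hi₀) hgi₀.le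
  refine ⟨i₀, hi₀, q - c • g, fun i hi => ?_, ?_⟩
  · have hi := (Finset.mem_erase.1 hi).2
    simp only [Pi.sub_apply, Pi.smul_apply, smul_eq_mul, sub_nonneg]
    rcases le_or_gt (g i) 0 with hgi | hgi
    · exact (mul_nonpos_of_nonneg_of_nonpos hc hgi).trans (hq i hi)
    · exact (le_div_iff₀ hgi).1 (hmin i (Finset.mem_filter.2 ⟨hi, hgi⟩))
  · rw [Finset.sum_erase s (by simp [c, div_mul_cancel₀ _ hgi₀.ne'])]
    simp [sub_smul, Finset.sum_sub_distrib, mul_smul, ← Finset.smul_sum, hg]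

lemma exists_linearIndepOn_mem_conicHull (hx : x ∈ conicHull v s) :
    ∃ t ⊆ s, LinearIndepOn ℝ v (t : Set ι) ∧ x ∈ conicHull v t := by
  classical
  induction s using Finset.strongInduction with
  | H s ih =>
    by_cases hs : LinearIndepOn ℝ v (s : Set ι)
    · exact ⟨s, subset_rfl, hs, hx⟩
    · obtain ⟨i, hi, hxi⟩ := exists_mem_conicHull_erase_of_not_linearIndepOn hx hs
      obtain ⟨t, hts, ht, hxt⟩ := ih _ (Finset.erase_ssubset hi) hxi
      exact ⟨t, hts.trans (Finset.erase_subset i s), ht, hxt⟩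

lemma conicHull_eq_image :
    conicHull v s = Fintype.linearCombination ℝ (fun i : (s : Set ι) => v i) '' {q | 0 ≤ q} := by
  classical
  ext x
  simp only [Set.mem_image, Set.mem_ofPred_eq, Fintype.linearCombination_apply]
  constructor
  · rintro ⟨q, hq, rfl⟩
    exact ⟨fun i => q i, fun i => hq i i.2, Finset.sum_coe_sort s (fun i => q i • v i)⟩
  · rintro ⟨q, hq, rfl⟩
    refine ⟨fun i => if h : i ∈ s then q ⟨i, h⟩ else 0, fun i hi => by simpa [hi] using hq _, ?_⟩
    rw [← Finset.sum_coe_sort s]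
    exact Finset.sum_congr rfl fun i _ => by simp [i.2]

variable [TopologicalSpace E] [IsTopologicalAddGroup E] [ContinuousSMul ℝ E] [T2Space E]

lemma isClosed_conicHull_of_linearIndepOn (hs : LinearIndepOn ℝ v (s : Set ι)) :
    IsClosed (conicHull v s) := by
  rw [conicHull_eq_image]
  refine (LinearMap.isClosedEmbedding_of_injective ?_).isClosedMap _ (isClosed_Ici (a := 0))
  exact LinearMap.ker_eq_bot.2 hs.fintypeLinearCombination_injective

lemma isClosed_conicHull : IsClosed (conicHull v s) := by
  classical
  have : conicHull v s =
      ⋃ t ∈ s.powerset.filter (fun t : Finset ι => LinearIndepOn ℝ v (t : Set ι)),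
        conicHull v t := by
    refine subset_antisymm (fun x hx => ?_) (Set.iUnion₂_subset fun t ht => ?_)
    · obtain ⟨t, hts, ht, hxt⟩ := exists_linearIndepOn_mem_conicHull hx
      exact Set.mem_biUnion (Finset.mem_filter.2 ⟨Finset.mem_powerset.2 hts, ht⟩) hxt
    · exact conicHull_mono (Finset.mem_powerset.1 (Finset.mem_filter.1 ht).1)
  rw [this]
  exact isClosed_biUnion_finset fun t ht =>
    isClosed_conicHull_of_linearIndepOn (Finset.mem_filter.1 ht).2

variable [LocallyConvexSpace ℝ E]

theorem exists_dual_pos_of_notMem_conicHull (hx : x ∉ conicHull v s) :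
    ∃ f : StrongDual ℝ E, (∀ i ∈ s, f (v i) ≤ 0) ∧ 0 < f x := by
  obtain ⟨f, u, hf, hfx⟩ :=
    geometric_hahn_banach_closed_point convex_conicHull isClosed_conicHull hx
  have hu : 0 < u := by simpa using hf 0 zero_mem_conicHull
  have hf_nonpos : ∀ y ∈ conicHull v s, f y ≤ 0 := by
    intro y hy
    by_contra! hfy
    have := hf _ (smul_mem_conicHull (div_pos hu hfy).le hy)
    rw [map_smul, smul_eq_mul, div_mul_cancel₀ _ hfy.ne'] at this
    exact this.false
  exact ⟨f, fun i hi => hf_nonpos _ (mem_conicHull_of_mem hi), hu.trans hfx⟩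

end ConicHull

namespace Matrix

variable {m n : Type*} [Fintype n]

theorem exists_nonneg_vecMul_eq_iff [Fintype m] (A : Matrix m n ℝ) (c : n → ℝ) :
    (∃ p, 0 ≤ p ∧ p ᵥ* A = c) ↔ ∀ y, A *ᵥ y ≤ 0 → c ⬝ᵥ y ≤ 0 := by
  constructor
  · rintro ⟨p, hp, rfl⟩ y hy
    rw [← dotProduct_mulVec]
    simpa using dotProduct_le_dotProduct_of_nonneg_left hy hp
  · intro h
    by_contra hc
    have hcA : c ∉ conicHull (fun i => A i) Finset.univ := by
      rintro ⟨p, hp, hpc⟩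
      exact hc ⟨p, fun i => hp i (Finset.mem_univ i), by rwa [vecMul_eq_sum]⟩
    obtain ⟨f, hfA, hfc⟩ := exists_dual_pos_of_notMem_conicHull hcA
    classical
    set y : n → ℝ := fun j => f fun k => if j = k then 1 else 0
    have hfy : ∀ z, f z = z ⬝ᵥ y := fun z => (f : (n → ℝ) →ₗ[ℝ] ℝ).pi_apply_eq_sum_univ z
    have hAy : A *ᵥ y ≤ 0 := fun i => by simpa [hfy, mulVec] using hfA i (Finset.mem_univ i)
    exact (h y hAy).not_gt (by rwa [hfy] at hfc)

variable {D : Matrix m n ℝ} {e : m → ℝ} {x : n → ℝ} {b : ℝ}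

lemma dotProduct_le_dotProduct_of_transpose_mulVec_eq [Fintype m] {p : m → ℝ} {a : n → ℝ}
    (hp : 0 ≤ p) (hpx : Dᵀ *ᵥ p = x) (ha : D *ᵥ a ≤ e) : a ⬝ᵥ x ≤ p ⬝ᵥ e := by
  rw [← hpx, dotProduct_mulVec, vecMul_transpose, dotProduct_comm p]
  exact dotProduct_le_dotProduct_of_nonneg_right ha hp

lemma dotProduct_nonpos_of_mulVec_nonpos (hne : ∃ a, D *ᵥ a ≤ e)
    (h : ∀ a, D *ᵥ a ≤ e → a ⬝ᵥ x ≤ b) {y : n → ℝ} (hy : D *ᵥ y ≤ 0) : y ⬝ᵥ x ≤ 0 := by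
  obtain ⟨a₀, ha₀⟩ := hne
  by_contra! hyx
  set s := (b - a₀ ⬝ᵥ x + 1) / (y ⬝ᵥ x)
  have hs : 0 ≤ s := div_nonneg (by linarith [h a₀ ha₀]) hyx.le
  have hfeas : D *ᵥ (a₀ + s • y) ≤ e := by
    rw [mulVec_add, mulVec_smul]
    exact add_le_of_le_of_nonpos ha₀ (smul_nonpos_of_nonneg_of_nonpos hs hy)
  have := h _ hfeas
  rw [add_dotProduct, smul_dotProduct, smul_eq_mul, div_mul_cancel₀ _ hyx.ne'] at this
  linarith

lemma dotProduct_le_mul_of_mulVec_le_smul (hne : ∃ a, D *ᵥ a ≤ e)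
    (h : ∀ a, D *ᵥ a ≤ e → a ⬝ᵥ x ≤ b) {y : n → ℝ} {τ : ℝ} (hτ : 0 ≤ τ)
    (hy : D *ᵥ y ≤ τ • e) : y ⬝ᵥ x ≤ τ * b := by
  rcases hτ.eq_or_lt with rfl | hτ
  · simpa using dotProduct_nonpos_of_mulVec_nonpos hne h (by simpa using hy)
  · have ha : D *ᵥ (τ⁻¹ • y) ≤ e :=
      calc D *ᵥ (τ⁻¹ • y) = τ⁻¹ • D *ᵥ y := mulVec_smul D τ⁻¹ y
        _ ≤ τ⁻¹ • τ • e := smul_le_smul_of_nonneg_left hy (inv_nonneg.2 hτ.le)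
        _ = e := inv_smul_smul₀ hτ.ne' e
    have := h _ ha
    rwa [smul_dotProduct, smul_eq_mul, inv_mul_le_iff₀ hτ] at this

/-- Farkas' lemma for the block matrix with rows `(Dᵢ, eᵢ)` and `(0, 1)`. -/
lemma exists_nonneg_dual_of_forall_mulVec_le_smul [Fintype m]
    (h : ∀ y τ, 0 ≤ τ → D *ᵥ y ≤ τ • e → y ⬝ᵥ x ≤ τ * b) :
    ∃ p, 0 ≤ p ∧ Dᵀ *ᵥ p = x ∧ p ⬝ᵥ e ≤ b := by
  obtain ⟨p', hp', hpc⟩ := (exists_nonneg_vecMul_eq_iff (Sum.elim x fun _ => b)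
      (A := fromBlocks D (replicateCol Unit e) 0 (1 : Matrix Unit Unit ℝ))).2 <| by
    intro z hz
    obtain ⟨y, t, rfl⟩ : ∃ y t, z = Sum.elim y fun _ => t :=
      ⟨z ∘ Sum.inl, z (Sum.inr ()), by ext (i | _) <;> rfl⟩
    rw [fromBlocks_mulVec] at hz
    have ht : t ≤ 0 := by simpa using hz (Sum.inr ())
    have hy : D *ᵥ y ≤ (-t) • e := fun i => by
      have hi : (D *ᵥ y) i + e i * t ≤ 0 := by simpa [mulVec, dotProduct] using hz (Sum.inl i)
      simp only [Pi.smul_apply, smul_eq_mul]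
      linarith
    have hyx := h y (-t) (neg_nonneg.2 ht) hy
    have hbt : (fun _ : Unit => b) ⬝ᵥ (fun _ => t) = b * t := by simp [dotProduct]
    rw [sumElim_dotProduct_sumElim, dotProduct_comm x, hbt]
    linarith
  obtain ⟨p, s, rfl⟩ : ∃ p s, p' = Sum.elim p fun _ => s :=
    ⟨p' ∘ Sum.inl, p' (Sum.inr ()), by ext (i | _) <;> rfl⟩
  rw [vecMul_fromBlocks] at hpc
  refine ⟨p, fun i => hp' (Sum.inl i), ?_, ?_⟩
  · rw [mulVec_transpose]
    exact funext fun j => by simpa using congrFun hpc (Sum.inl j)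
  · have hb : p ⬝ᵥ e + s = b := by
      simpa [mulVec_replicateCol_eq_const] using congrFun hpc (Sum.inr ())
    have hs : 0 ≤ s := hp' (Sum.inr ())
    linarith

end Matrix

/-- robust linear constraint over a nonempty polyhedral uncertainty set
`U = {a : Da ≤ e}` holds iff there exists `p ≥ 0` with `Dᵀp = x` and `p·e ≤ b`. -/
theorem robust_polytope_reformulation
    {r d : ℕ} (D : Matrix (Fin r) (Fin d) ℝ) (e : Fin r → ℝ)
    (x : Fin d → ℝ) (b : ℝ)
    (hne : ∃ a : Fin d → ℝ, D.mulVec a ≤ e) :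
    (∀ a : Fin d → ℝ, D.mulVec a ≤ e → a ⬝ᵥ x ≤ b) ↔
      ∃ p : Fin r → ℝ, 0 ≤ p ∧ D.transpose.mulVec p = x ∧ p ⬝ᵥ e ≤ b := by
  constructor
  · intro h
    exact Matrix.exists_nonneg_dual_of_forall_mulVec_le_smul fun y τ hτ hy =>
      Matrix.dotProduct_le_mul_of_mulVec_le_smul hne h hτ hy
  · rintro ⟨p, hp, hpx, hpb⟩ a ha
    exact (Matrix.dotProduct_le_dotProduct_of_transpose_mulVec_eq hp hpx ha).trans hpb
end

section
/- Let N : ℝ^{ld} → ℝ be a norm (N(z) ≥ 0 with N(z)=0 iff z=0, N(cz)=|c|N(z), and N(z+w) ≤ N(z)+N(w)), and let N*(y) = sup{ y·z : z ∈ ℝ^{ld}, N(z) ≤ 1 } be its dual norm (finite by finite-dimensionality). Let Ā ∈ ℝ^{l×d} with rows ā₁ᵀ,…,ā_lᵀ, let M ∈ ℝ^{ld×ld} be invertible, let ρ ≥ 0, b ∈ ℝ^l, and x ∈ ℝ^d. For A ∈ ℝ^{l×d} let vec(A) ∈ ℝ^{ld} be the concatenation of the rows of A, and for i ∈ {1,…,l}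 let x_i ∈ ℝ^{ld} be the vector whose entries (i−1)d+1 through id equal x and whose remaining entries are 0. Then 'Ax ≤ b (componentwise) for every A ∈ ℝ^{l×d} with N(M(vec(A) − vec(Ā))) ≤ ρ' holds if and only if ā_i·x + ρ N*((Mᵀ)⁻¹ x_i) ≤ b_i for every i ∈ {1,…,l}. -/
open Matrix

/-- The dual norm `N*(y) = sup { y·z : N(z) ≤ 1 }` of a norm `N` on `ℝ^{l×d}`
(vectorized matrices, indexed by `Fin l × Fin d`). -/
noncomputable def dualNorm {l d : ℕ} (N : (Fin l × Fin d → ℝ) → ℝ)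
    (y : Fin l × Fin d → ℝ) : ℝ :=
  sSup ((fun z => y ⬝ᵥ z) '' {z | N z ≤ 1})

/-!
Substituting `w = M (vec A − vec Ā)`, which ranges over all of `ℝ^{ld}` as `A` ranges over the
matrices, row `i` of `Ax` becomes `āᵢ·x + w·(Mᵀ)⁻¹xᵢ`. So row `i` of the robust system says that the
linear functional `w ↦ w·(Mᵀ)⁻¹xᵢ` is at most `bᵢ − āᵢ·x` on the `N`-ball of radius `ρ`, and by
homogeneity its supremum there is `ρ N*((Mᵀ)⁻¹xᵢ)`. That supremum is finite because in finite
dimension the `N`-ball is bounded: `N` is convex, hence continuous, and so has a positive minimum on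
the compact unit sphere of a reference norm.
-/

namespace Seminorm

section FiniteDimensional

variable {E : Type*} [NormedAddCommGroup E] [NormedSpace ℝ E] [FiniteDimensional ℝ E]
  (p : Seminorm ℝ E)

theorem exists_pos_mul_norm_le (hp : ∀ z, p z = 0 → z = 0) : ∃ m > 0, ∀ z, m * ‖z‖ ≤ p z := by
  have hcont : Continuous p := continuousOn_univ.1 (p.convexOn.continuousOn isOpen_univ)
  have hpos : ∀ z ∈ Metric.sphere (0 : E) 1, 0 < p z := fun z hz =>
    (apply_nonneg p z).lt_of_ne' fun h => by simp [hp z h] at hz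
  obtain ⟨m, hm, hmin⟩ := (isCompact_sphere (0 : E) 1).exists_forall_le' hcont.continuousOn hpos
  refine ⟨m, hm, fun z => ?_⟩
  rcases eq_or_ne z 0 with rfl | hz
  · simp
  have hz' : 0 < ‖z‖ := norm_pos_iff.2 hz
  have := hmin (‖z‖⁻¹ • z) (by simp [norm_smul, hz'.ne'])
  rw [map_smul_eq_mul, norm_inv, norm_norm, le_inv_mul_iff₀ hz'] at this
  linarith

theorem isBounded_sublevel (hp : ∀ z, p z = 0 → z = 0) (r : ℝ) :
    Bornology.IsBounded {z | p z ≤ r} := by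
  obtain ⟨m, hm, hle⟩ := p.exists_pos_mul_norm_le hp
  refine (Metric.isBounded_closedBall (x := 0) (r := r / m)).subset fun z hz => ?_
  rw [mem_closedBall_zero_iff, le_div_iff₀ hm, mul_comm]
  exact (hle z).trans hz

theorem bddAbove_image_sublevel (hp : ∀ z, p z = 0 → z = 0) (f : E →ₗ[ℝ] ℝ) (r : ℝ) :
    BddAbove (f '' {z | p z ≤ r}) :=
  ((p.isBounded_sublevel hp r).isCompact_closure.bddAbove_image
    f.continuous_of_finiteDimensional.continuousOn).mono (Set.image_mono subset_closure)

end FiniteDimensional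

variable {E : Type*} [AddCommGroup E] [Module ℝ E] (p : Seminorm ℝ E)

theorem mul_sSup_image_sublevel_le_iff (hp : ∀ z, p z = 0 → z = 0) (f : E →ₗ[ℝ] ℝ)
    (hf : BddAbove (f '' {z | p z ≤ 1})) {ρ : ℝ} (hρ : 0 ≤ ρ) (c : ℝ) :
    ρ * sSup (f '' {z | p z ≤ 1}) ≤ c ↔ ∀ w, p w ≤ ρ → f w ≤ c := by
  rcases hρ.eq_or_lt with rfl | hρ
  · have hball : ∀ w, p w ≤ 0 ↔ w = 0 := fun w =>
      ⟨fun h => hp w (h.antisymm (apply_nonneg p w)), fun h => by simp [h]⟩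
    simp [hball]
  constructor
  · intro h w hw
    have hmem : f (ρ⁻¹ • w) ∈ f '' {z | p z ≤ 1} := by
      refine ⟨_, show p (ρ⁻¹ • w) ≤ 1 from ?_, rfl⟩
      rw [map_smul_eq_mul, Real.norm_of_nonneg (inv_nonneg.2 hρ.le)]
      exact inv_mul_le_one_of_le₀ hw hρ.le
    have := mul_le_mul_of_nonneg_left (le_csSup hf hmem) hρ.le
    rw [map_smul, smul_eq_mul, mul_inv_cancel_left₀ hρ.ne'] at this
    exact this.trans h
  · intro h
    rw [← le_div_iff₀' hρ]
    refine csSup_le ⟨0, 0, by simp, map_zero f⟩ ?_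
    rintro _ ⟨z, hz, rfl⟩
    rw [le_div_iff₀' hρ, ← smul_eq_mul, ← map_smul]
    refine h _ ?_
    rw [map_smul_eq_mul, Real.norm_of_nonneg hρ.le]
    exact mul_le_of_le_one_right hρ.le hz

end Seminorm

namespace Matrix

theorem mulVec_dotProduct_transpose_inv_mulVec {n R : Type*} [Fintype n] [DecidableEq n]
    [CommRing R] {M : Matrix n n R} (hM : IsUnit M.det) (u v : n → R) :
    M *ᵥ u ⬝ᵥ Mᵀ⁻¹ *ᵥ v = u ⬝ᵥ v := by
  rw [dotProduct_comm, dotProduct_mulVec, ← mulVec_transpose, mulVec_mulVec,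
    mul_nonsing_inv _ (by rwa [det_transpose]), one_mulVec, dotProduct_comm]

variable {m n R : Type*} [Fintype m] [Fintype n] [DecidableEq m] [CommRing R]

theorem uncurry_dotProduct_ite_eq (A : Matrix m n R) (x : n → R) (i : m) :
    (fun p : m × n => A p.1 p.2) ⬝ᵥ (fun p => if p.1 = i then x p.2 else 0) = (A *ᵥ x) i := by
  simp [dotProduct, Fintype.sum_prod_type, mulVec]

variable [DecidableEq n]

theorem mulVec_apply_eq_add_dotProduct {M : Matrix (m × n) (m × n) R} (hM : IsUnit M.det)
    (A Abar : Matrix m n R) (x : n → R) (i : m) :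
    (A *ᵥ x) i = (Abar *ᵥ x) i + (Mᵀ⁻¹ *ᵥ fun p => if p.1 = i then x p.2 else 0) ⬝ᵥ
      (M *ᵥ fun p => A p.1 p.2 - Abar p.1 p.2) := by
  have h := uncurry_dotProduct_ite_eq (A - Abar) x i
  simp only [Matrix.sub_apply, sub_mulVec, Pi.sub_apply] at h
  rw [dotProduct_comm, mulVec_dotProduct_transpose_inv_mulVec hM, h, add_sub_cancel]

theorem surjective_mulVec_uncurry_sub {M : Matrix (m × n) (m × n) R} (hM : IsUnit M.det)
    (Abar : Matrix m n R) :
    Function.Surjective fun A : Matrix m n R => M *ᵥ fun p => A p.1 p.2 - Abar p.1 p.2 := by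
  intro w
  obtain ⟨u, rfl⟩ := mulVec_surjective_iff_isUnit.2 ((isUnit_iff_isUnit_det M).2 hM) w
  exact ⟨Abar + of (Function.curry u), by simp⟩

end Matrix

theorem robust_general_norm_reformulation_general
    {l d : ℕ} (N : (Fin l × Fin d → ℝ) → ℝ)
    (hNzero : ∀ z, N z = 0 ↔ z = 0)
    (hNsmul : ∀ (c : ℝ) (z), N (c • z) = |c| * N z)
    (hNadd : ∀ z w, N (z + w) ≤ N z + N w)
    (Abar : Matrix (Fin l) (Fin d) ℝ)
    (M : Matrix (Fin l × Fin d) (Fin l × Fin d) ℝ) (hM : IsUnit M.det)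
    (ρ : ℝ) (hρ : 0 ≤ ρ) (b : Fin l → ℝ) (x : Fin d → ℝ) :
    (∀ A : Matrix (Fin l) (Fin d) ℝ,
        N (M.mulVec (fun p => A p.1 p.2 - Abar p.1 p.2)) ≤ ρ →
        ∀ i : Fin l, A.mulVec x i ≤ b i) ↔
      (∀ i : Fin l,
        Abar.mulVec x i +
          ρ * dualNorm N
            ((M.transpose)⁻¹.mulVec (fun p => if p.1 = i then x p.2 else 0)) ≤ b i) := by
  let p : Seminorm ℝ (Fin l × Fin d → ℝ) :=
    Seminorm.of N hNadd fun c z => by rw [hNsmul, Real.norm_eq_abs]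
  have hp : ∀ z, p z = 0 → z = 0 := fun z => (hNzero z).1
  have hrow : ∀ i, (∀ A : Matrix (Fin l) (Fin d) ℝ,
      N (M *ᵥ fun p => A p.1 p.2 - Abar p.1 p.2) ≤ ρ → (A *ᵥ x) i ≤ b i) ↔
      (Abar *ᵥ x) i + ρ * dualNorm N (Mᵀ⁻¹ *ᵥ fun p => if p.1 = i then x p.2 else 0) ≤ b i := by
    intro i
    set y : Fin l × Fin d → ℝ := Mᵀ⁻¹ *ᵥ fun p => if p.1 = i then x p.2 else 0
    let f := dotProductBilin ℝ ℝ y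
    calc _ ↔ ∀ w, p w ≤ ρ → f w ≤ b i - (Abar *ᵥ x) i := by
          rw [(surjective_mulVec_uncurry_sub hM Abar).forall]
          refine forall_congr' fun A => imp_congr_right fun _ => ?_
          rw [mulVec_apply_eq_add_dotProduct hM A Abar, le_sub_iff_add_le']
          rfl
      _ ↔ ρ * dualNorm N y ≤ b i - (Abar *ᵥ x) i :=
          (p.mul_sSup_image_sublevel_le_iff hp f (p.bddAbove_image_sublevel hp f 1) hρ _).symm
      _ ↔ _ := le_sub_iff_add_le'
  exact ⟨fun h i => (hrow i).1 fun A hA => h A hA i, fun h A hA i => (hrow i).2 (h i) A hA⟩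

/-- the robust system `Ax ≤ b` over the general-norm uncertainty set
`{A : N(M(vec(A) − vec(Ā))) ≤ ρ}` holds iff `ā_i·x + ρ N*((Mᵀ)⁻¹ x_i) ≤ b_i` for each
row `i`, where `x_i` has `x` in the `i`-th block and `0` elsewhere. -/
theorem robust_general_norm_reformulation
    {l d : ℕ} (N : (Fin l × Fin d → ℝ) → ℝ)
    (hN0 : ∀ z, 0 ≤ N z)
    (hNzero : ∀ z, N z = 0 ↔ z = 0)
    (hNsmul : ∀ (c : ℝ) (z), N (c • z) = |c| * N z)
    (hNadd : ∀ z w, N (z + w) ≤ N z + N w)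
    (Abar : Matrix (Fin l) (Fin d) ℝ)
    (M : Matrix (Fin l × Fin d) (Fin l × Fin d) ℝ) (hM : IsUnit M.det)
    (ρ : ℝ) (hρ : 0 ≤ ρ) (b : Fin l → ℝ) (x : Fin d → ℝ) :
    (∀ A : Matrix (Fin l) (Fin d) ℝ,
        N (M.mulVec (fun p => A p.1 p.2 - Abar p.1 p.2)) ≤ ρ →
        ∀ i : Fin l, A.mulVec x i ≤ b i) ↔
      (∀ i : Fin l,
        Abar.mulVec x i +
          ρ * dualNorm N
            ((M.transpose)⁻¹.mulVec (fun p => if p.1 = i then x p.2 else 0)) ≤ b i) :=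
  robust_general_norm_reformulation_general N hNzero hNsmul hNadd Abar M hM ρ hρ b x
end

section
/- Let p, a, c be positive integers, let A₀ ∈ ℝ^{p×p} be symmetric, let L ∈ ℝ^{a×p} and R ∈ ℝ^{c×p}, and let ρ > 0. Then the robust linear matrix inequality 'A₀ + Lᵀ ζ R + Rᵀ ζᵀ L ≻ 0 (positive definite) for every ζ ∈ ℝ^{a×c} with spectral norm ‖ζ‖_{2,2} ≤ ρ' holds if and only if there exists λ ∈ ℝ such that the symmetric (a+p)×(a+p) block matrix [ [ λ I_a , ρ L ] ; [ ρ Lᵀ , A₀ − λ RᵀR ] ] is positive definite. -/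
open Matrix

/-- The Euclidean (L²) norm of a finite real vector. -/
noncomputable def euclNorm {k : ℕ} (v : Fin k → ℝ) : ℝ :=
  Real.sqrt (∑ i, v i ^ 2)

/-- The spectral norm (largest singular value) of a real matrix: the operator norm
`sup {‖ζu‖₂ : ‖u‖₂ ≤ 1}` with respect to Euclidean norms. -/
noncomputable def specNorm {a c : ℕ} (ζ : Matrix (Fin a) (Fin c) ℝ) : ℝ :=
  sSup ((fun u => euclNorm (ζ.mulVec u)) '' {u : Fin c → ℝ | euclNorm u ≤ 1})

/-! The worst `ζ` of spectral norm `≤ ρ` is a rank-one matrix turning the cross term into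
`-2ρ‖Lv‖‖Rv‖`, so the robust LMI says exactly that `vᵀA₀v > 2ρ‖Lv‖‖Rv‖` for all `v ≠ 0`.
Completing the square (a Schur complement), the block matrix is positive definite iff `λ > 0` and
the pencil `λ²RᵀR - λA₀ + ρ²LᵀL` is negative definite, which gives that inequality by AM-GM.
Conversely (an S-lemma), for each `v` the `λ` making the pencil negative at `v` form a nonempty
open interval; any two of these intervals meet, by an intermediate value argument in the plane
of the two vectors, and compactness of the unit sphere then yields a common `λ`. -/

open Set

section Scalar

variable {a l r t : ℝ}

theorem exists_quadratic_neg (ha : 0 < a) (hr : 0 ≤ r) (hdisc : 4 * l * r < a ^ 2) :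
    ∃ t : ℝ, t ^ 2 * r - t * a + l < 0 := by
  rcases hr.eq_or_lt with rfl | hr
  · exact ⟨(l + 1) / a, by field_simp; linarith⟩
  · refine ⟨a / (2 * r), ?_⟩
    field_simp
    nlinarith

theorem quadratic_neg_at_vertex (ha : 0 < a) (hr : 0 ≤ r) (hdisc : 4 * l * r < a ^ 2)
    (hvertex : a = 2 * t * r) : t ^ 2 * r - t * a + l < 0 := by
  subst hvertex
  have hr : 0 < r := by
    rcases hr.eq_or_lt with rfl | hr
    · simp at ha
    · exact hr
  nlinarith

theorem quadratic_neg_iff (ha : 0 < a) (hr : 0 ≤ r) (hdisc : 4 * l * r < a ^ 2) :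
    t ^ 2 * r - t * a + l < 0 ↔
      2 * l / (a + √(a ^ 2 - 4 * l * r)) < t ∧ t * (2 * r / (a + √(a ^ 2 - 4 * l * r))) < 1 := by
  set d := √(a ^ 2 - 4 * l * r)
  have hd : d ^ 2 = a ^ 2 - 4 * l * r := Real.sq_sqrt (by linarith)
  have hs : 0 < a + d := by positivity
  have hfactor :
      2 * (a + d) * (t ^ 2 * r - t * a + l) = (2 * t * r - (a + d)) * (t * (a + d) - 2 * l) := by
    linear_combination t * hd
  rw [div_lt_iff₀ hs, mul_div_assoc', div_lt_one hs]
  constructor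
  · intro h
    have hprod : (2 * t * r - (a + d)) * (t * (a + d) - 2 * l) < 0 := by
      rw [← hfactor]; exact mul_neg_of_pos_of_neg (by positivity) h
    rcases mul_neg_iff.1 hprod with ⟨h1, h2⟩ | ⟨h1, h2⟩
    · have ht : 0 < t := pos_of_mul_pos_left (by linarith : 0 < t * (2 * r)) (by linarith)
      have hts : 0 < t * (a + d) := by positivity
      have := mul_lt_mul'' (by linarith : a + d < 2 * t * r) (by linarith : t * (a + d) < 2 * l)
        hs.le hts.le
      nlinarith [Real.sqrt_nonneg (a ^ 2 - 4 * l * r)]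
    · constructor <;> linarith
  · rintro ⟨h1, h2⟩
    have hprod : (2 * t * r - (a + d)) * (t * (a + d) - 2 * l) < 0 :=
      mul_neg_of_neg_of_pos (by linarith) (by linarith)
    rw [← hfactor] at hprod
    exact neg_of_mul_neg_right hprod (by positivity)

theorem two_mul_mul_lt_of_quadratic_neg {x y ρ : ℝ} (ht : 0 < t)
    (h : t ^ 2 * y ^ 2 - t * a + ρ ^ 2 * x ^ 2 < 0) : 2 * ρ * (x * y) < a := by
  nlinarith [sq_nonneg (t * y - ρ * x)]

end Scalar

namespace QuadraticMap

variable {E : Type*} [AddCommGroup E] [Module ℝ E]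

theorem map_smul_add_smul (Q : QuadraticForm ℝ E) (s t : ℝ) (x y : E) :
    Q (s • x + t • y) = s ^ 2 * Q x + s * t * polar Q x y + t ^ 2 * Q y := by
  rw [QuadraticMap.map_add (⇑Q), QuadraticMap.map_smul, QuadraticMap.map_smul, polar_smul_left,
    polar_smul_right]
  simp only [smul_eq_mul]
  ring

theorem exists_segment_map_nonneg_and_eq_zero (Q D : QuadraticForm ℝ E) {x y : E}
    (hQx : 0 ≤ Q x) (hQy : 0 ≤ Q y) (hpolar : 0 ≤ polar Q x y) (hDx : 0 ≤ D x) (hDy : D y ≤ 0) :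
    ∃ t ∈ Icc (0 : ℝ) 1, 0 ≤ Q ((1 - t) • x + t • y) ∧ D ((1 - t) • x + t • y) = 0 := by
  have hcont : ContinuousOn (fun t : ℝ => D ((1 - t) • x + t • y)) (Icc 0 1) := by
    simp only [map_smul_add_smul]
    fun_prop
  obtain ⟨t, ⟨ht0, ht1⟩, hDt⟩ :=
    intermediate_value_Icc' zero_le_one hcont (by simpa using And.intro hDy hDx)
  refine ⟨t, ⟨ht0, ht1⟩, ?_, hDt⟩
  rw [map_smul_add_smul]
  have : 0 ≤ 1 - t := by linarith
  positivity

end QuadraticMap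

open QuadraticMap

section Pencil

variable {E : Type*} [AddCommGroup E] [Module ℝ E] (A Bl Br : QuadraticForm ℝ E)

noncomputable def pencil (t : ℝ) : QuadraticForm ℝ E := t ^ 2 • Br - t • A + Bl

@[simp]
theorem pencil_apply (t : ℝ) (z : E) : pencil A Bl Br t z = t ^ 2 * Br z - t * A z + Bl z := by
  simp [pencil]

theorem pencil_apply_taylor (s t : ℝ) (z : E) :
    pencil A Bl Br t z =
      pencil A Bl Br s z + (t - s) * (2 * s * Br z - A z) + (t - s) ^ 2 * Br z := by
  simp only [pencil_apply]; ring

/-- The roots of `t ↦ t² Br z - t A z + Bl z` are `2 Bl z / s` and `s / (2 Br z)` with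
`s = A z + √(A z² - 4 Bl z Br z)`; the lower root and the reciprocal of the upper one, as below,
stay finite and continuous where `Br z = 0`. -/
noncomputable def pencilLowerRoot (z : E) : ℝ :=
  2 * Bl z / (A z + √(A z ^ 2 - 4 * Bl z * Br z))

noncomputable def pencilUpperRootInv (z : E) : ℝ :=
  2 * Br z / (A z + √(A z ^ 2 - 4 * Bl z * Br z))

variable {A Bl Br} {z : E}

theorem pencil_neg_iff (hA : 0 < A z) (hBr : 0 ≤ Br z) (hdisc : 4 * Bl z * Br z < A z ^ 2)
    (t : ℝ) :
    pencil A Bl Br t z < 0 ↔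
      pencilLowerRoot A Bl Br z < t ∧ t * pencilUpperRootInv A Bl Br z < 1 := by
  rw [pencil_apply]
  exact quadratic_neg_iff hA hBr hdisc

theorem exists_pencil_neg (hA : 0 < A z) (hBr : 0 ≤ Br z) (hdisc : 4 * Bl z * Br z < A z ^ 2) :
    ∃ t, pencil A Bl Br t z < 0 := by
  simpa only [pencil_apply] using exists_quadratic_neg hA hBr hdisc

theorem pencil_neg_or_neg_of_deriv_sign_change (hA : A.PosDef) (hBr : ∀ z, 0 ≤ Br z)
    (hdisc : ∀ z ≠ 0, 4 * Bl z * Br z < A z ^ 2) {x y : E} (hxy : LinearIndependent ℝ ![x, y])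
    {u : ℝ} (hDx : 0 < 2 * u * Br x - A x) (hDy : 2 * u * Br y - A y < 0) :
    pencil A Bl Br u x < 0 ∨ pencil A Bl Br u y < 0 := by
  by_contra! hPxy
  obtain ⟨hPx, hPy⟩ := hPxy
  /- The derivative form `D = 2u Br - A` changes sign on a segment from `x` to `±y` along which
  `pencil u` stays `≥ 0`; where `D` vanishes, `pencil u` is at its vertex, hence negative. -/
  set P := pencil A Bl Br u
  set D : QuadraticForm ℝ E := (2 * u) • Br - A
  have hD : ∀ z, D z = 2 * u * Br z - A z := fun z => by simp [D]
  obtain ⟨y', hxy', hPy', hDy', hpolar⟩ : ∃ y', LinearIndependent ℝ ![x, y'] ∧ 0 ≤ P y' ∧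
      D y' < 0 ∧ 0 ≤ polar P x y' := by
    rcases le_total 0 (polar P x y) with h | h
    · exact ⟨y, hxy, hPy, by rwa [hD], h⟩
    · refine ⟨-y, by simpa using hxy, by rwa [QuadraticMap.map_neg], ?_, ?_⟩
      · rwa [QuadraticMap.map_neg, hD]
      · rw [polar_neg_right]; linarith
  obtain ⟨r, -, hPz, hDz⟩ := exists_segment_map_nonneg_and_eq_zero P D hPx hPy' hpolar
    (by rw [hD]; exact hDx.le) hDy'.le
  set z := (1 - r) • x + r • y'
  have hz : z ≠ 0 := fun h => by
    have := LinearIndependent.pair_iff.1 hxy' _ _ h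
    linarith [this.1, this.2]
  rw [hD] at hDz
  have hneg := quadratic_neg_at_vertex (t := u) (hA z hz) (hBr z) (hdisc z hz) (by linarith)
  rw [← pencil_apply] at hneg
  exact hPz.not_gt hneg

theorem exists_pencil_neg_pair_of_lt (hA : A.PosDef) (hBr : ∀ z, 0 ≤ Br z)
    (hdisc : ∀ z ≠ 0, 4 * Bl z * Br z < A z ^ 2) {x y : E} (hxy : LinearIndependent ℝ ![x, y])
    {s t : ℝ} (hx : pencil A Bl Br s x < 0) (hy : pencil A Bl Br t y < 0) (hst : s < t) :
    ∃ u, pencil A Bl Br u x < 0 ∧ pencil A Bl Br u y < 0 := by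
  by_contra! hsep
  set P := pencil A Bl Br
  have hcont : Continuous fun u => P u x - P u y := by simp only [P, pencil_apply]; fun_prop
  -- at a crossing point both pencils are `≥ 0`, with `P · x` increasing and `P · y` decreasing
  obtain ⟨u, ⟨hsu, hut⟩, hcross⟩ : ∃ u ∈ Icc s t, P u x - P u y = 0 :=
    intermediate_value_Icc hst.le hcont.continuousOn
      ⟨by linarith [hsep s hx], by linarith [le_of_not_gt fun h => (hsep t h).not_gt hy]⟩
  have hPx : 0 ≤ P u x := le_of_not_gt fun h => by linarith [hsep u h]
  have hPy : 0 ≤ P u y := by linarith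
  have hDx : 0 < 2 * u * Br x - A x := by
    nlinarith [pencil_apply_taylor A Bl Br u s x, hBr x]
  have hDy : 2 * u * Br y - A y < 0 := by
    nlinarith [pencil_apply_taylor A Bl Br u t y, hBr y]
  rcases pencil_neg_or_neg_of_deriv_sign_change hA hBr hdisc hxy hDx hDy with h | h
  · exact h.not_ge hPx
  · exact h.not_ge hPy

theorem exists_pencil_neg_pair (hA : A.PosDef) (hBr : ∀ z, 0 ≤ Br z)
    (hdisc : ∀ z ≠ 0, 4 * Bl z * Br z < A z ^ 2) {x y : E} (hx : x ≠ 0) (hy : y ≠ 0) :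
    ∃ t, pencil A Bl Br t x < 0 ∧ pencil A Bl Br t y < 0 := by
  obtain ⟨s, hs⟩ := exists_pencil_neg (hA x hx) (hBr x) (hdisc x hx)
  by_cases hxy : LinearIndependent ℝ ![x, y]
  · obtain ⟨t, ht⟩ := exists_pencil_neg (hA y hy) (hBr y) (hdisc y hy)
    rcases lt_trichotomy s t with hst | rfl | hts
    · exact exists_pencil_neg_pair_of_lt hA hBr hdisc hxy hs ht hst
    · exact ⟨s, hs, ht⟩
    · obtain ⟨u, hu⟩ := exists_pencil_neg_pair_of_lt hA hBr hdisc
        (LinearIndependent.pair_symm_iff.1 hxy) ht hs hts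
      exact ⟨u, hu.symm⟩
  · obtain ⟨c, rfl⟩ : ∃ c : ℝ, c • x = y := by
      simpa [LinearIndependent.pair_iff' hx] using hxy
    refine ⟨s, hs, ?_⟩
    rw [QuadraticMap.map_smul, smul_eq_mul]
    exact mul_neg_of_pos_of_neg (mul_self_pos.2 (left_ne_zero_of_smul hy)) hs

end Pencil

theorem QuadraticMap.continuous_of_finiteDimensional {E : Type*} [NormedAddCommGroup E]
    [NormedSpace ℝ E] [FiniteDimensional ℝ E] (Q : QuadraticForm ℝ E) : Continuous Q := by
  let B : E →ₗ[ℝ] E →L[ℝ] ℝ :=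
    (LinearMap.toContinuousLinearMap : (E →ₗ[ℝ] ℝ) ≃ₗ[ℝ] _).toLinearMap ∘ₗ polarBilin Q
  have hB : Continuous fun z => B z z :=
    (LinearMap.continuous_of_finiteDimensional B).clm_apply continuous_id
  convert hB.div_const 2 with z
  simp [B, polar_self]

section Compact

variable {E : Type*} [NormedAddCommGroup E] [NormedSpace ℝ E] [FiniteDimensional ℝ E]
  {A Bl Br : QuadraticForm ℝ E}

theorem exists_pos_forall_pencil_neg (hA : A.PosDef) (hBl : ∀ z, 0 ≤ Bl z)
    (hBr : ∀ z, 0 ≤ Br z) (hdisc : ∀ z ≠ 0, 4 * Bl z * Br z < A z ^ 2) :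
    ∃ t, 0 < t ∧ ∀ z ≠ 0, pencil A Bl Br t z < 0 := by
  rcases subsingleton_or_nontrivial E with hE | hE
  · exact ⟨1, one_pos, fun z hz => absurd (Subsingleton.elim z 0) hz⟩
  set S := Metric.sphere (0 : E) 1
  have hS0 : ∀ z ∈ S, z ≠ 0 := fun z hz => ne_zero_of_mem_unit_sphere ⟨z, hz⟩
  have hroot : ∀ z ∈ S, 0 < A z + √(A z ^ 2 - 4 * Bl z * Br z) := fun z hz =>
    add_pos_of_pos_of_nonneg (hA z (hS0 z hz)) (Real.sqrt_nonneg _)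
  have hAc := A.continuous_of_finiteDimensional
  have hBlc := Bl.continuous_of_finiteDimensional
  have hBrc := Br.continuous_of_finiteDimensional
  have hSne : S.Nonempty := NormedSpace.sphere_nonempty.2 zero_le_one
  obtain ⟨x, hxS, hxmax⟩ := (isCompact_sphere (0 : E) 1).exists_isMaxOn hSne
    (f := pencilLowerRoot A Bl Br)
    (ContinuousOn.div (by fun_prop) (by fun_prop) fun z hz => (hroot z hz).ne')
  obtain ⟨y, hyS, hymax⟩ := (isCompact_sphere (0 : E) 1).exists_isMaxOn hSne
    (f := pencilUpperRootInv A Bl Br)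
    (ContinuousOn.div (by fun_prop) (by fun_prop) fun z hz => (hroot z hz).ne')
  have hx := hS0 x hxS
  have hy := hS0 y hyS
  -- `x` and `y` are the worst points of the sphere, so a `t` that works for both works for all
  obtain ⟨t, htx, hty⟩ := exists_pencil_neg_pair hA hBr hdisc hx hy
  rw [pencil_neg_iff (hA x hx) (hBr x) (hdisc x hx)] at htx
  rw [pencil_neg_iff (hA y hy) (hBr y) (hdisc y hy)] at hty
  have ht : 0 < t :=
    (div_nonneg (mul_nonneg zero_le_two (hBl x)) (hroot x hxS).le).trans_lt htx.1
  refine ⟨t, ht, fun z hz => ?_⟩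
  have hnz : 0 < ‖z‖ := norm_pos_iff.2 hz
  set w := ‖z‖⁻¹ • z
  have hwS : w ∈ S := by simp [S, w, norm_smul, hnz.ne']
  have hw := hS0 w hwS
  have hzw : z = ‖z‖ • w := by simp [w, hnz.ne']
  rw [hzw, QuadraticMap.map_smul, smul_eq_mul]
  refine mul_neg_of_pos_of_neg (by positivity) ?_
  rw [pencil_neg_iff (hA w hw) (hBr w) (hdisc w hw)]
  exact ⟨(hxmax hwS).trans_lt htx.1,
    (mul_le_mul_of_nonneg_left (hymax hwS) ht.le).trans_lt hty.2⟩

end Compact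

section Matrices

variable {m n k : Type*} [Fintype m] [Fintype n] [Fintype k]

theorem dotProduct_self_nonneg (v : n → ℝ) : 0 ≤ v ⬝ᵥ v := by
  simpa using dotProduct_self_star_nonneg v

theorem dotProduct_self_pos {v : n → ℝ} (hv : v ≠ 0) : 0 < v ⬝ᵥ v := by
  simpa using dotProduct_self_star_pos_iff.2 hv

@[simp]
theorem Matrix.toQuadraticForm'_apply [DecidableEq n] (M : Matrix n n ℝ) (v : n → ℝ) :
    M.toQuadraticForm' v = v ⬝ᵥ M *ᵥ v := by
  simp [toQuadraticForm', toLinearMap₂'_apply']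

theorem dotProduct_transpose_mul_self_mulVec {α : Type*} [CommRing α] (M : Matrix m n α)
    (v : n → α) : v ⬝ᵥ (Mᵀ * M) *ᵥ v = M *ᵥ v ⬝ᵥ M *ᵥ v := by
  rw [← mulVec_mulVec, dotProduct_transpose_mulVec]

theorem dotProduct_add_transpose_mul_mulVec {α : Type*} [CommRing α] (A0 : Matrix n n α)
    (L : Matrix m n α) (R : Matrix k n α) (ζ : Matrix m k α) (v : n → α) :
    v ⬝ᵥ (A0 + Lᵀ * ζ * R + Rᵀ * ζᵀ * L) *ᵥ v = v ⬝ᵥ A0 *ᵥ v + 2 * (L *ᵥ v ⬝ᵥ ζ *ᵥ R *ᵥ v) := by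
  simp only [add_mulVec, dotProduct_add, ← mulVec_mulVec, dotProduct_transpose_mulVec]
  rw [dotProduct_comm (ζᵀ *ᵥ _), dotProduct_transpose_mulVec, dotProduct_comm (ζ *ᵥ _)]
  ring

theorem dotProduct_fromBlocks_mulVec [DecidableEq m] (A0 : Matrix n n ℝ) (L : Matrix m n ℝ)
    (R : Matrix k n ℝ) (ρ t : ℝ) (u : m → ℝ) (v : n → ℝ) :
    t * (Sum.elim u v ⬝ᵥ
        fromBlocks (t • 1) (ρ • L) (ρ • Lᵀ) (A0 - t • (Rᵀ * R)) *ᵥ Sum.elim u v) =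
      (t • u + ρ • L *ᵥ v) ⬝ᵥ (t • u + ρ • L *ᵥ v) -
        (t ^ 2 * (R *ᵥ v ⬝ᵥ R *ᵥ v) - t * (v ⬝ᵥ A0 *ᵥ v) + ρ ^ 2 * (L *ᵥ v ⬝ᵥ L *ᵥ v)) := by
  simp only [fromBlocks_mulVec, Sum.elim_comp_inl, Sum.elim_comp_inr, sumElim_dotProduct_sumElim,
    sub_mulVec, smul_mulVec, one_mulVec, ← mulVec_mulVec, dotProduct_add,
    dotProduct_sub, add_dotProduct, dotProduct_smul, smul_dotProduct, dotProduct_transpose_mulVec,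
    smul_eq_mul]
  rw [dotProduct_comm (L *ᵥ v) u]
  ring

theorem posDef_fromBlocks_iff [DecidableEq m] [DecidableEq n] {A0 : Matrix n n ℝ}
    (hA0 : A0.IsSymm) (L : Matrix m n ℝ) (R : Matrix k n ℝ) (ρ : ℝ) {t : ℝ} (ht : 0 < t) :
    (fromBlocks (t • 1) (ρ • L) (ρ • Lᵀ) (A0 - t • (Rᵀ * R))).PosDef ↔
      ∀ v ≠ 0,
        t ^ 2 * (R *ᵥ v ⬝ᵥ R *ᵥ v) - t * (v ⬝ᵥ A0 *ᵥ v) + ρ ^ 2 * (L *ᵥ v ⬝ᵥ L *ᵥ v) < 0 := by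
  have hsymm : (fromBlocks (t • 1) (ρ • L) (ρ • Lᵀ) (A0 - t • (Rᵀ * R))).IsSymm := by
    simp [IsSymm, fromBlocks_transpose, transpose_sub, hA0.eq]
  constructor
  · intro h v hv
    have hw : Sum.elim (-(ρ / t) • L *ᵥ v) v ≠ 0 := fun h0 =>
      hv (by simpa using congrArg (· ∘ Sum.inr) h0)
    have := h.toQuadraticForm' _ hw
    rw [toQuadraticForm'_apply, ← mul_pos_iff_of_pos_left ht, dotProduct_fromBlocks_mulVec] at this
    have hsq : t • (-(ρ / t) • L *ᵥ v) + ρ • L *ᵥ v = 0 := by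
      rw [smul_smul, mul_neg, mul_div_cancel₀ _ ht.ne', neg_smul, neg_add_cancel]
    rwa [hsq, zero_dotProduct, zero_sub, neg_pos] at this
  · intro h
    refine .of_toQuadraticForm' hsymm fun w hw => ?_
    rw [toQuadraticForm'_apply, ← Sum.elim_comp_inl_inr w, ← mul_pos_iff_of_pos_left ht,
      dotProduct_fromBlocks_mulVec]
    by_cases hv : w ∘ Sum.inr = 0
    · have hu : w ∘ Sum.inl ≠ 0 := fun hu => hw (by rw [← Sum.elim_comp_inl_inr w, hu, hv]; simp)
      simpa [hv] using dotProduct_self_pos (smul_ne_zero ht.ne' hu)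
    · linarith [h _ hv, dotProduct_self_nonneg (t • w ∘ Sum.inl + ρ • L *ᵥ w ∘ Sum.inr)]

end Matrices

theorem pos_of_posDef_fromBlocks {m n k : Type*} [DecidableEq m] [Nonempty m] [Fintype k]
    {A0 : Matrix n n ℝ} {L : Matrix m n ℝ} {R : Matrix k n ℝ} {ρ t : ℝ}
    (h : (fromBlocks (t • 1) (ρ • L) (ρ • Lᵀ) (A0 - t • (Rᵀ * R))).PosDef) : 0 < t := by
  simpa using h.diag_pos (i := Sum.inl (Classical.arbitrary m))

section Euclidean

open scoped Matrix.Norms.L2Operator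

variable {k : ℕ}

theorem euclNorm_eq_norm (v : Fin k → ℝ) :
    euclNorm v = ‖(WithLp.toLp 2 v : EuclideanSpace ℝ (Fin k))‖ := by
  simp [euclNorm, EuclideanSpace.norm_eq]

theorem euclNorm_nonneg (v : Fin k → ℝ) : 0 ≤ euclNorm v := Real.sqrt_nonneg _

theorem euclNorm_sq (v : Fin k → ℝ) : euclNorm v ^ 2 = v ⬝ᵥ v := by
  rw [euclNorm_eq_norm, ← real_inner_self_eq_norm_sq, EuclideanSpace.inner_toLp_toLp, star_trivial]

theorem euclNorm_smul (s : ℝ) (v : Fin k → ℝ) : euclNorm (s • v) = |s| * euclNorm v := by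
  rw [euclNorm_eq_norm, euclNorm_eq_norm, WithLp.toLp_smul, norm_smul, Real.norm_eq_abs]

theorem abs_dotProduct_le (v w : Fin k → ℝ) : |v ⬝ᵥ w| ≤ euclNorm v * euclNorm w := by
  rw [euclNorm_eq_norm, euclNorm_eq_norm]
  simpa [EuclideanSpace.inner_toLp_toLp, dotProduct_comm] using
    abs_real_inner_le_norm (WithLp.toLp 2 v : EuclideanSpace ℝ (Fin k)) (WithLp.toLp 2 w)

theorem specNorm_eq_l2_opNorm {a c : ℕ} (ζ : Matrix (Fin a) (Fin c) ℝ) : specNorm ζ = ‖ζ‖ := by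
  rw [l2_opNorm_def, ← ContinuousLinearMap.sSup_unitClosedBall_eq_norm, specNorm]
  congr 1
  ext r
  simp only [euclNorm_eq_norm, Set.mem_image, Set.mem_ofPred_eq, Metric.mem_closedBall,
    dist_zero_right, LinearEquiv.trans_apply, LinearMap.coe_toContinuousLinearMap']
  constructor
  · rintro ⟨u, hu, rfl⟩
    exact ⟨WithLp.toLp 2 u, hu, by simp⟩
  · rintro ⟨u, hu, rfl⟩
    exact ⟨u.ofLp, by simpa using hu, rfl⟩

theorem specNorm_le_iff {a c : ℕ} {ζ : Matrix (Fin a) (Fin c) ℝ} {ρ : ℝ} (hρ : 0 ≤ ρ) :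
    specNorm ζ ≤ ρ ↔ ∀ u, euclNorm (ζ *ᵥ u) ≤ ρ * euclNorm u := by
  rw [specNorm_eq_l2_opNorm, l2_opNorm_def, ContinuousLinearMap.opNorm_le_iff hρ]
  simp only [euclNorm_eq_norm]
  exact ⟨fun h u => h (WithLp.toLp 2 u), fun h u => h u.ofLp⟩

theorem exists_specNorm_le_dotProduct_mulVec_eq {a c : ℕ} {ρ : ℝ} (hρ : 0 ≤ ρ)
    (x : Fin a → ℝ) (y : Fin c → ℝ) :
    ∃ ζ : Matrix (Fin a) (Fin c) ℝ, specNorm ζ ≤ ρ ∧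
      x ⬝ᵥ ζ *ᵥ y = -(ρ * (euclNorm x * euclNorm y)) := by
  rcases (mul_nonneg (euclNorm_nonneg x) (euclNorm_nonneg y)).eq_or_lt with hs | hs
  · refine ⟨0, (specNorm_le_iff hρ).2 fun u => ?_, by simp [← hs]⟩
    simpa [euclNorm] using mul_nonneg hρ (euclNorm_nonneg u)
  have hs0 := hs.ne'
  have hζ : ∀ u, (-(ρ / (euclNorm x * euclNorm y)) • vecMulVec x y) *ᵥ u =
      (-(ρ / (euclNorm x * euclNorm y)) * (y ⬝ᵥ u)) • x := fun u => by
    rw [smul_mulVec, vecMulVec_mulVec, op_smul_eq_smul, smul_smul]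
  refine ⟨-(ρ / (euclNorm x * euclNorm y)) • vecMulVec x y, (specNorm_le_iff hρ).2 fun u => ?_, ?_⟩
  · rw [hζ, euclNorm_smul, abs_mul, abs_neg, abs_of_nonneg (by positivity)]
    calc ρ / (euclNorm x * euclNorm y) * |y ⬝ᵥ u| * euclNorm x
        ≤ ρ / (euclNorm x * euclNorm y) * (euclNorm y * euclNorm u) * euclNorm x := by
          gcongr
          · exact euclNorm_nonneg x
          · exact abs_dotProduct_le y u
      _ = ρ / (euclNorm x * euclNorm y) * (euclNorm x * euclNorm y) * euclNorm u := by ring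
      _ = ρ * euclNorm u := by rw [div_mul_cancel₀ _ hs0]
  · rw [hζ, dotProduct_smul, smul_eq_mul, ← euclNorm_sq, ← euclNorm_sq]
    field_simp

end Euclidean

section RobustLMI

variable {p a c : ℕ}

theorem forall_specNorm_le_posDef_iff {A0 : Matrix (Fin p) (Fin p) ℝ} (hA0 : A0.IsSymm)
    (L : Matrix (Fin a) (Fin p) ℝ) (R : Matrix (Fin c) (Fin p) ℝ) {ρ : ℝ} (hρ : 0 ≤ ρ) :
    (∀ ζ : Matrix (Fin a) (Fin c) ℝ, specNorm ζ ≤ ρ → (A0 + Lᵀ * ζ * R + Rᵀ * ζᵀ * L).PosDef) ↔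
      ∀ v ≠ 0, 2 * ρ * (euclNorm (L *ᵥ v) * euclNorm (R *ᵥ v)) < v ⬝ᵥ A0 *ᵥ v := by
  constructor
  · intro h v hv
    obtain ⟨ζ, hζ, hworst⟩ := exists_specNorm_le_dotProduct_mulVec_eq hρ (L *ᵥ v) (R *ᵥ v)
    have := (h ζ hζ).toQuadraticForm' v hv
    rw [toQuadraticForm'_apply, dotProduct_add_transpose_mul_mulVec, hworst] at this
    linarith
  · intro h ζ hζ
    have hsymm : (A0 + Lᵀ * ζ * R + Rᵀ * ζᵀ * L).IsSymm := by
      simp only [IsSymm, transpose_add, transpose_mul, transpose_transpose, hA0.eq,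
        Matrix.mul_assoc]
      abel
    refine .of_toQuadraticForm' hsymm fun v hv => ?_
    rw [toQuadraticForm'_apply, dotProduct_add_transpose_mul_mulVec]
    have hcross : |L *ᵥ v ⬝ᵥ ζ *ᵥ R *ᵥ v| ≤ ρ * (euclNorm (L *ᵥ v) * euclNorm (R *ᵥ v)) :=
      calc |L *ᵥ v ⬝ᵥ ζ *ᵥ R *ᵥ v| ≤ euclNorm (L *ᵥ v) * euclNorm (ζ *ᵥ R *ᵥ v) :=
            abs_dotProduct_le _ _
        _ ≤ euclNorm (L *ᵥ v) * (ρ * euclNorm (R *ᵥ v)) :=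
            mul_le_mul_of_nonneg_left ((specNorm_le_iff hρ).1 hζ _) (euclNorm_nonneg _)
        _ = ρ * (euclNorm (L *ᵥ v) * euclNorm (R *ᵥ v)) := by ring
    linarith [h v hv, neg_abs_le (L *ᵥ v ⬝ᵥ ζ *ᵥ R *ᵥ v)]

theorem exists_pos_pencil_neg_of_forall_lt {A0 : Matrix (Fin p) (Fin p) ℝ}
    {L : Matrix (Fin a) (Fin p) ℝ} {R : Matrix (Fin c) (Fin p) ℝ} {ρ : ℝ} (hρ : 0 ≤ ρ)
    (h : ∀ v ≠ 0, 2 * ρ * (euclNorm (L *ᵥ v) * euclNorm (R *ᵥ v)) < v ⬝ᵥ A0 *ᵥ v) :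
    ∃ t, 0 < t ∧ ∀ v ≠ 0,
      t ^ 2 * (R *ᵥ v ⬝ᵥ R *ᵥ v) - t * (v ⬝ᵥ A0 *ᵥ v) + ρ ^ 2 * (L *ᵥ v ⬝ᵥ L *ᵥ v) < 0 := by
  have hcross_nonneg : ∀ v, 0 ≤ 2 * ρ * (euclNorm (L *ᵥ v) * euclNorm (R *ᵥ v)) := fun v => by
    have := euclNorm_nonneg (L *ᵥ v); have := euclNorm_nonneg (R *ᵥ v); positivity
  obtain ⟨t, ht, hneg⟩ := exists_pos_forall_pencil_neg (A := A0.toQuadraticForm')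
    (Bl := ρ ^ 2 • (Lᵀ * L).toQuadraticForm') (Br := (Rᵀ * R).toQuadraticForm')
    (fun v hv => by simpa using (hcross_nonneg v).trans_lt (h v hv))
    (fun v => by
      simpa [dotProduct_transpose_mul_self_mulVec] using
        mul_nonneg (sq_nonneg ρ) (dotProduct_self_nonneg (L *ᵥ v)))
    (fun v => by
      simpa [dotProduct_transpose_mul_self_mulVec] using dotProduct_self_nonneg (R *ᵥ v))
    (fun v hv => by
      have := pow_lt_pow_left₀ (h v hv) (hcross_nonneg v) two_ne_zero
      simp only [_root_.smul_apply, toQuadraticForm'_apply, dotProduct_transpose_mul_self_mulVec,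
        smul_eq_mul, ← euclNorm_sq]
      linarith)
  refine ⟨t, ht, fun v hv => ?_⟩
  simpa [dotProduct_transpose_mul_self_mulVec, mul_assoc] using hneg v hv

end RobustLMI

theorem robust_sdp_reformulation_general
    {p a c : ℕ} (ha : 0 < a)
    (A0 : Matrix (Fin p) (Fin p) ℝ) (hA0 : A0.IsSymm)
    (L : Matrix (Fin a) (Fin p) ℝ) (R : Matrix (Fin c) (Fin p) ℝ)
    (ρ : ℝ) (hρ : 0 < ρ) :
    (∀ ζ : Matrix (Fin a) (Fin c) ℝ, specNorm ζ ≤ ρ →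
        (A0 + L.transpose * ζ * R + R.transpose * ζ.transpose * L).PosDef) ↔
      ∃ lam : ℝ,
        (Matrix.fromBlocks (lam • (1 : Matrix (Fin a) (Fin a) ℝ)) (ρ • L)
          (ρ • L.transpose) (A0 - lam • (R.transpose * R))).PosDef := by
  have : Nonempty (Fin a) := ⟨⟨0, ha⟩⟩
  rw [forall_specNorm_le_posDef_iff hA0 L R hρ.le]
  constructor
  · intro h
    obtain ⟨t, ht, hneg⟩ := exists_pos_pencil_neg_of_forall_lt hρ.le h
    exact ⟨t, (posDef_fromBlocks_iff hA0 L R ρ ht).2 hneg⟩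
  · rintro ⟨t, hblock⟩ v hv
    have ht := pos_of_posDef_fromBlocks hblock
    apply two_mul_mul_lt_of_quadratic_neg ht
    simpa only [euclNorm_sq] using (posDef_fromBlocks_iff hA0 L R ρ ht).1 hblock v hv

/-- the robust LMI `A₀ + Lᵀ ζ R + Rᵀ ζᵀ L ≻ 0` for all `ζ` with spectral
norm `‖ζ‖₂,₂ ≤ ρ` holds iff there exists `λ` making the block matrix
`[[λI_a, ρL]; [ρLᵀ, A₀ − λRᵀR]]` positive definite. -/
theorem robust_sdp_reformulation
    {p a c : ℕ} (hp : 0 < p) (ha : 0 < a) (hc : 0 < c)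
    (A0 : Matrix (Fin p) (Fin p) ℝ) (hA0 : A0.IsSymm)
    (L : Matrix (Fin a) (Fin p) ℝ) (R : Matrix (Fin c) (Fin p) ℝ)
    (ρ : ℝ) (hρ : 0 < ρ) :
    (∀ ζ : Matrix (Fin a) (Fin c) ℝ, specNorm ζ ≤ ρ →
        (A0 + L.transpose * ζ * R + R.transpose * ζ.transpose * L).PosDef) ↔
      ∃ lam : ℝ,
        (Matrix.fromBlocks (lam • (1 : Matrix (Fin a) (Fin a) ℝ)) (ρ • L)
          (ρ • L.transpose) (A0 - lam • (R.transpose * R))).PosDef :=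
  robust_sdp_reformulation_general ha A0 hA0 L R ρ hρ
end

section
/- Let ξ-space ℝ^m be partitioned into blocks: m = r₁ + ⋯ + r_k and write ξ = (ξ¹,…,ξᵏ) with ξⁱ ∈ ℝ^{rᵢ}; similarly partition μ ∈ ℝ^m into (μ¹,…,μᵏ). Let M ∈ ℝ^{m×m} be block diagonal with blocks Mⁱ ∈ ℝ^{rᵢ×rᵢ}. Define t_joint(ξ) = ‖M(ξ−μ)‖₂² and t_ind(ξ) = max_{i=1,…,k} ‖Mⁱ(ξⁱ−μⁱ)‖₂². Let ζ₁,…,ζ_n ∈ ℝ^m be data points and let i* ∈ {1,…,n}; set ρ_joint equal to the i*-th smallest value among t_joint(ζ₁),…,t_joint(ζ_n) and ρ_ind equal to the i*-th smallest value among t_ind(ζ₁),…,t_ind(ζ_n). Define U_joint = {ξ : t_joint(ξ) ≤ ρ_joint} and U_ind = {ξ : t_ind(ξ) ≤ ρ_ind}. Let f : ℝ^d → ℝ and, for each i, let C_i ⊆ ℝ^d × ℝ^{rᵢ} be an arbitrary constraint set. Then: (a) ρ_joint ≥ ρ_ind; (b) every x ∈ ℝ^d satisfying '(x, ξⁱ)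 ∈ C_i for all i and all ξ ∈ U_joint' also satisfies '(x, ξⁱ) ∈ C_i for all i and all ξ ∈ U_ind'; and consequently (c) if x_joint minimizes f over the first (joint) feasible set and x_ind minimizes f over the second (individual) feasible set, then f(x_joint) ≥ f(x_ind). -/
open Matrix

/-!
Every block term is at most the maximum of the block terms, which is at most their sum, so
`t_ind ≤ t_joint` pointwise and order statistics are monotone: this gives (a). For (b), a point
`ξ ∈ U_ind` and a block `i`, replace every other block of `ξ` by the centre `μ`: the resulting
point has joint value equal to the `i`-th block term of `ξ`, which is at most
`t_ind ξ ≤ ρ_ind ≤ ρ_joint`, so it lies in `U_joint` and agrees with `ξ` on block `i`. Part (c)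
is (b) applied to the joint optimum.
-/

theorem Tuple.apply_sort_le_of_lt_card {n : ℕ} {α : Type*} [LinearOrder α] (u : Fin n → α)
    (j : Fin n) {s : Finset (Fin n)} (hs : j.val < s.card) {c : α} (hc : ∀ a ∈ s, u a ≤ c) :
    u (Tuple.sort u j) ≤ c := by
  set τ := Tuple.sort u
  have hcard : ((Finset.Iio j).image τ).card < s.card := by
    rwa [Finset.card_image_of_injective _ τ.injective, Fin.card_Iio]
  obtain ⟨a, has, ha⟩ := Finset.exists_mem_notMem_of_card_lt_card hcard
  have hj : j ≤ τ.symm a := by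
    by_contra! hlt
    exact ha (Finset.mem_image.mpr ⟨τ.symm a, Finset.mem_Iio.mpr hlt, τ.apply_symm_apply a⟩)
  calc u (τ j) ≤ u (τ (τ.symm a)) := Tuple.monotone_sort u hj
    _ = u a := by rw [τ.apply_symm_apply]
    _ ≤ c := hc a has

theorem orderStat_mono {n : ℕ} {u v : Fin n → ℝ} (huv : u ≤ v) (r : ℕ) :
    orderStat u r ≤ orderStat v r := by
  unfold orderStat
  split_ifs with h
  · set j : Fin n := ⟨r - 1, h⟩
    set σ := Tuple.sort v
    apply Tuple.apply_sort_le_of_lt_card u j (s := (Finset.Iic j).image σ)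
    · rw [Finset.card_image_of_injective _ σ.injective, Fin.card_Iic]
      exact j.val.lt_succ_self
    · simp only [Finset.mem_image, Finset.mem_Iic, forall_exists_index, and_imp]
      rintro _ l hl rfl
      exact (huv (σ l)).trans (Tuple.monotone_sort v hl)
  · rfl

theorem Real.iSup_le_sum {ι : Type*} [Fintype ι] {g : ι → ℝ} (hg : ∀ i, 0 ≤ g i) :
    ⨆ i, g i ≤ ∑ i, g i :=
  Real.iSup_le (fun i => Finset.single_le_sum (fun i _ => hg i) (Finset.mem_univ i))
    (Finset.sum_nonneg fun i _ => hg i)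

theorem Fintype.sum_apply_update_of_apply_eq_zero {ι : Type*} [Fintype ι] [DecidableEq ι]
    {β : ι → Type*} (q : (i : ι) → β i → ℝ) {c : (i : ι) → β i} (hc : ∀ i, q i (c i) = 0)
    (i : ι) (x : β i) :
    ∑ l, q l (Function.update c i x l) = q i x := by
  rw [Fintype.sum_eq_single i fun l hl => by rw [Function.update_of_ne hl, hc],
    Function.update_self]

theorem joint_vs_individual_ellipsoids_general
    {k d n : ℕ} (r : Fin k → ℕ)
    (Mi : (i : Fin k) → Matrix (Fin (r i)) (Fin (r i)) ℝ)
    (μ : (i : Fin k) → Fin (r i) → ℝ)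
    (ζ : Fin n → ((i : Fin k) → Fin (r i) → ℝ))
    (istar : ℕ)
    (tjoint tind : ((i : Fin k) → Fin (r i) → ℝ) → ℝ)
    (htjoint : ∀ ξ, tjoint ξ =
      ∑ i, ∑ j, ((Mi i).mulVec (fun j' => ξ i j' - μ i j') j) ^ 2)
    (htind : ∀ ξ, tind ξ =
      ⨆ i, ∑ j, ((Mi i).mulVec (fun j' => ξ i j' - μ i j') j) ^ 2)
    (ρjoint ρind : ℝ)
    (hρjoint : ρjoint = orderStat (fun a => tjoint (ζ a)) istar)
    (hρind : ρind = orderStat (fun a => tind (ζ a)) istar)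
    (f : (Fin d → ℝ) → ℝ)
    (C : (i : Fin k) → Set ((Fin d → ℝ) × (Fin (r i) → ℝ))) :
    ρind ≤ ρjoint ∧
    (∀ x : Fin d → ℝ,
      (∀ ξ, tjoint ξ ≤ ρjoint → ∀ i, (x, ξ i) ∈ C i) →
      (∀ ξ, tind ξ ≤ ρind → ∀ i, (x, ξ i) ∈ C i)) ∧
    (∀ xjoint xind : Fin d → ℝ,
      ((∀ ξ, tjoint ξ ≤ ρjoint → ∀ i, (xjoint, ξ i) ∈ C i) ∧
        ∀ x : Fin d → ℝ,
          (∀ ξ, tjoint ξ ≤ ρjoint → ∀ i, (x, ξ i) ∈ C i) → f xjoint ≤ f x) →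
      ((∀ ξ, tind ξ ≤ ρind → ∀ i, (xind, ξ i) ∈ C i) ∧
        ∀ x : Fin d → ℝ,
          (∀ ξ, tind ξ ≤ ρind → ∀ i, (x, ξ i) ∈ C i) → f xind ≤ f x) →
      f xind ≤ f xjoint) := by
  set q : (i : Fin k) → (Fin (r i) → ℝ) → ℝ := fun i x => ∑ j, ((Mi i) *ᵥ (x - μ i)) j ^ 2
  have hq_nonneg : ∀ i x, 0 ≤ q i x := fun i x => Finset.sum_nonneg fun j _ => sq_nonneg _
  have hq_center : ∀ i, q i (μ i) = 0 := fun i => by simp [q]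
  have hblock_le_tind : ∀ ξ i, q i (ξ i) ≤ tind ξ := fun ξ i => by
    rw [htind]; exact le_ciSup (Finite.bddAbove_range fun i => q i (ξ i)) i
  have hρ : ρind ≤ ρjoint := by
    rw [hρind, hρjoint]
    refine orderStat_mono (fun a => ?_) istar
    rw [htind, htjoint]
    exact Real.iSup_le_sum fun i => hq_nonneg i _
  have hfeas : ∀ x : Fin d → ℝ, (∀ ξ, tjoint ξ ≤ ρjoint → ∀ i, (x, ξ i) ∈ C i) →
      ∀ ξ, tind ξ ≤ ρind → ∀ i, (x, ξ i) ∈ C i := by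
    intro x hx ξ hξ i
    have hjoint : tjoint (Function.update μ i (ξ i)) = q i (ξ i) := by
      rw [htjoint]; exact Fintype.sum_apply_update_of_apply_eq_zero q hq_center i (ξ i)
    simpa using hx (Function.update μ i (ξ i)) (by linarith [hblock_le_tind ξ i]) i
  exact ⟨hρ, hfeas, fun xjoint _ ⟨hjoint, _⟩ ⟨_, hind_opt⟩ => hind_opt xjoint (hfeas xjoint hjoint)⟩

/-- comparing a consolidated (joint) block-diagonal ellipsoid with
individually calibrated per-block ellipsoids, both calibrated by the `i*`-th order
statistic of the same data: (a) `ρ_joint ≥ ρ_ind`; (b) joint-robust feasibility implies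
individual-robust feasibility; (c) hence the individual construction has an optimal value
no worse than the joint one. -/
theorem joint_vs_individual_ellipsoids
    {k d n : ℕ} (hk : 0 < k) (hn : 0 < n) (r : Fin k → ℕ)
    (Mi : (i : Fin k) → Matrix (Fin (r i)) (Fin (r i)) ℝ)
    (μ : (i : Fin k) → Fin (r i) → ℝ)
    (ζ : Fin n → ((i : Fin k) → Fin (r i) → ℝ))
    (istar : ℕ) (histar1 : 1 ≤ istar) (histar2 : istar ≤ n)
    (tjoint tind : ((i : Fin k) → Fin (r i) → ℝ) → ℝ)
    (htjoint : ∀ ξ, tjoint ξ =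
      ∑ i, ∑ j, ((Mi i).mulVec (fun j' => ξ i j' - μ i j') j) ^ 2)
    (htind : ∀ ξ, tind ξ =
      ⨆ i, ∑ j, ((Mi i).mulVec (fun j' => ξ i j' - μ i j') j) ^ 2)
    (ρjoint ρind : ℝ)
    (hρjoint : ρjoint = orderStat (fun a => tjoint (ζ a)) istar)
    (hρind : ρind = orderStat (fun a => tind (ζ a)) istar)
    (f : (Fin d → ℝ) → ℝ)
    (C : (i : Fin k) → Set ((Fin d → ℝ) × (Fin (r i) → ℝ))) :
    ρind ≤ ρjoint ∧
    (∀ x : Fin d → ℝ,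
      (∀ ξ, tjoint ξ ≤ ρjoint → ∀ i, (x, ξ i) ∈ C i) →
      (∀ ξ, tind ξ ≤ ρind → ∀ i, (x, ξ i) ∈ C i)) ∧
    (∀ xjoint xind : Fin d → ℝ,
      ((∀ ξ, tjoint ξ ≤ ρjoint → ∀ i, (xjoint, ξ i) ∈ C i) ∧
        ∀ x : Fin d → ℝ,
          (∀ ξ, tjoint ξ ≤ ρjoint → ∀ i, (x, ξ i) ∈ C i) → f xjoint ≤ f x) →
      ((∀ ξ, tind ξ ≤ ρind → ∀ i, (xind, ξ i) ∈ C i) ∧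
        ∀ x : Fin d → ℝ,
          (∀ ξ, tind ξ ≤ ρind → ∀ i, (x, ξ i) ∈ C i) → f xind ≤ f x) →
      f xind ≤ f xjoint) :=
  joint_vs_individual_ellipsoids_general r Mi μ ζ istar tjoint tind htjoint htind ρjoint ρind
    hρjoint hρind f C
end

section
/- Let ξ be an ℝ^m-valued random vector with law P, let ε ∈ (0,1), and let g = (g_j)_{j=1,…,l} with each g_j(x;·) : ℝ^m → ℝ measurable, b = (b_j) ∈ ℝ^l, and k = (k_j) ∈ ℝ^l with k_j > 0 for all j. Given any point x̂ ∈ ℝ^d, let T(ξ) = max_{j=1,…,l} (g_j(x̂;ξ) − b_j)/k_j and let ρ = inf{t ∈ ℝ : P(T(ξ) ≤ t) ≥ 1−ε} be the (1−ε)-quantile of T(ξ). Then any x ∈ ℝ^d satisfying the reconstructed robust constraint 'g_j(x;z) ≤ b_j for all j = 1,…,l, for every z ∈ ℝ^m with g_j(x̂;z) ≤ b_j + ρ k_j for all j' (with {z : g_j(x;z) ≤ b_j ∀j} measurable) satisfies the chance constraint P( g_j(x;ξ) ≤ b_j for all j = 1,…,l ) ≥ 1−ε. This holds regardless of whether x̂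 itself satisfies the chance constraint. -/
open MeasureTheory

/-- feasibility guarantee for reconstruction: with `ρ` equal to the
`(1-ε)`-quantile of `max_j (g_j(x̂;ξ)−b_j)/k_j`, any solution of the reconstructed robust
problem (using the uncertainty set `{z : g(x̂;z) ≤ b + ρk}`) satisfies the joint chance
constraint, regardless of whether `x̂` does. -/
theorem reconstruction_feasibility
    {m d l : ℕ} (hl : 0 < l)
    {Ω : Type*} [MeasurableSpace Ω] (P : Measure Ω) [IsProbabilityMeasure P]
    (ξ : Ω → (Fin m → ℝ)) (hξ : Measurable ξ)
    (ε : ℝ) (hε : ε ∈ Set.Ioo (0 : ℝ) 1)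
    (g : (Fin d → ℝ) → (Fin m → ℝ) → Fin l → ℝ)
    (hg : ∀ (x : Fin d → ℝ) (j : Fin l), Measurable fun z => g x z j)
    (b k : Fin l → ℝ) (hk : ∀ j, 0 < k j)
    (xhat : Fin d → ℝ)
    (ρ : ℝ)
    (hρ : ρ = sInf {t : ℝ | ENNReal.ofReal (1 - ε) ≤
      P {ω | (⨆ j : Fin l, (g xhat (ξ ω) j - b j) / k j) ≤ t}})
    (x : Fin d → ℝ)
    (hfeas : ∀ z : Fin m → ℝ,
      (∀ j, g xhat z j ≤ b j + ρ * k j) → ∀ j, g x z j ≤ b j)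
    (hmeas : MeasurableSet {z : Fin m → ℝ | ∀ j, g x z j ≤ b j}) :
    ENNReal.ofReal (1 - ε) ≤ P {ω | ∀ j, g x (ξ ω) j ≤ b j} := by
  obtain ⟨hε0, hε1⟩ := hε
  haveI : Nonempty (Fin l) := ⟨⟨0, hl⟩⟩
  set T : Ω → ℝ := fun ω => ⨆ j : Fin l, (g xhat (ξ ω) j - b j) / k j with hT
  have hTmeas : Measurable T := by
    apply Measurable.iSup
    intro j
    exact (((hg xhat j).comp hξ).sub measurable_const).div_const _
  set S : Set ℝ := {t : ℝ | ENNReal.ofReal (1 - ε) ≤ P {ω | T ω ≤ t}} with hS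
  have hmono : ∀ s t : ℝ, s ≤ t → P {ω | T ω ≤ s} ≤ P {ω | T ω ≤ t} :=
    fun s t h => measure_mono (fun ω hw => le_trans hw h)
  -- S is nonempty
  have hlt1 : ENNReal.ofReal (1 - ε) < 1 := by
    rw [← ENNReal.ofReal_one]
    exact ENNReal.ofReal_lt_ofReal_iff_of_nonneg (by linarith) |>.2 (by linarith)
  have hpos : (0 : ENNReal) < ENNReal.ofReal (1 - ε) := ENNReal.ofReal_pos.2 (by linarith)
  have hne : S.Nonempty := by
    have hU : ⋃ n : ℕ, {ω | T ω ≤ (n : ℝ)} = Set.univ := by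
      ext ω; simp only [Set.mem_iUnion, Set.mem_univ, iff_true, Set.mem_setOf_eq]
      obtain ⟨n, hn⟩ := exists_nat_ge (T ω)
      exact ⟨n, hn⟩
    have htend : Filter.Tendsto (fun n : ℕ => P {ω | T ω ≤ (n : ℝ)})
        Filter.atTop (nhds (P (⋃ n : ℕ, {ω | T ω ≤ (n : ℝ)}))) :=
      tendsto_measure_iUnion_atTop (fun n m hnm => Set.setOf_subset_setOf.2
        fun ω hw => hw.trans (Nat.cast_le.2 hnm))
    rw [hU, measure_univ] at htend
    have := htend.eventually_const_lt hlt1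
    obtain ⟨n, hn⟩ := this.exists
    exact ⟨(n : ℝ), le_of_lt hn⟩
  -- S is bounded below
  have hbdd : BddBelow S := by
    have hI : ⋂ n : ℕ, {ω | T ω ≤ -(n : ℝ)} = ∅ := by
      ext ω; simp only [Set.mem_iInter, Set.mem_empty_iff_false, iff_false, not_forall,
        Set.mem_setOf_eq, not_le]
      obtain ⟨n, hn⟩ := exists_nat_gt (-(T ω))
      exact ⟨n, by linarith⟩
    have htend : Filter.Tendsto (fun n : ℕ => P {ω | T ω ≤ -(n : ℝ)})
        Filter.atTop (nhds (P (⋂ n : ℕ, {ω | T ω ≤ -(n : ℝ)}))) := by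
      apply tendsto_measure_iInter_atTop
      · exact fun n => ((hTmeas measurableSet_Iic).nullMeasurableSet)
      · intro n m hnm
        exact Set.setOf_subset_setOf.2 fun ω hw => hw.trans (neg_le_neg (Nat.cast_le.2 hnm))
      · exact ⟨0, measure_ne_top _ _⟩
    rw [hI, measure_empty] at htend
    obtain ⟨n, hn⟩ := (htend.eventually_lt_const hpos).exists
    refine ⟨-(n : ℝ), fun t ht => ?_⟩
    by_contra hlt
    push_neg at hlt
    exact absurd (le_trans ht (hmono _ _ hlt.le)) (not_le.2 hn)
  -- P {T ≤ ρ} ≥ 1 - ε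
  have hρS : ρ = sInf S := hρ
  have hkey : ENNReal.ofReal (1 - ε) ≤ P {ω | T ω ≤ ρ} := by
    have hIeq : {ω | T ω ≤ ρ} = ⋂ n : ℕ, {ω | T ω ≤ ρ + 1 / (n + 1)} := by
      ext ω
      simp only [Set.mem_iInter, Set.mem_setOf_eq]
      constructor
      · intro h n
        have : (0 : ℝ) < 1 / (n + 1) := by positivity
        linarith
      · intro h
        by_contra hc
        push_neg at hc
        obtain ⟨n, hn⟩ := exists_nat_one_div_lt (sub_pos.2 hc)
        have := h n
        push_cast at hn
        linarith
    have htend : Filter.Tendsto (fun n : ℕ => P {ω | T ω ≤ ρ + 1 / (n + 1)})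
        Filter.atTop (nhds (P (⋂ n : ℕ, {ω | T ω ≤ ρ + 1 / (n + 1)}))) := by
      apply tendsto_measure_iInter_atTop
      · exact fun n => ((hTmeas measurableSet_Iic).nullMeasurableSet)
      · intro n m hnm
        refine Set.setOf_subset_setOf.2 fun ω hw => hw.trans ?_
        have : ((n : ℝ) + 1) ≤ (m : ℝ) + 1 := by exact_mod_cast Nat.succ_le_succ hnm
        gcongr
      · exact ⟨0, measure_ne_top _ _⟩
    rw [← hIeq] at htend
    refine ge_of_tendsto htend (Filter.Eventually.of_forall fun n => ?_)
    -- there is s ∈ S with s < ρ + 1/(n+1)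
    have hρlt : ρ < ρ + 1 / (n + 1) := by
      have : (0 : ℝ) < 1 / ((n : ℝ) + 1) := by positivity
      linarith
    have : ∃ s ∈ S, s < ρ + 1 / (n + 1) := by
      by_contra hcon
      push_neg at hcon
      have : ρ + 1 / (n + 1) ≤ sInf S := le_csInf hne hcon
      rw [← hρS] at this; linarith
    obtain ⟨s, hsS, hslt⟩ := this
    exact le_trans hsS (hmono _ _ hslt.le)
  -- inclusion
  refine le_trans hkey (measure_mono ?_)
  intro ω hω
  refine hfeas (ξ ω) (fun j => ?_)
  have hle : (g xhat (ξ ω) j - b j) / k j ≤ T ω :=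
    le_ciSup (f := fun j : Fin l => (g xhat (ξ ω) j - b j) / k j)
      (Set.Finite.bddAbove (Set.finite_range _)) j
  have := le_trans hle hω
  rw [div_le_iff₀ (hk j)] at this
  linarith
end

section
/- Let ξ be an ℝ^m-valued random vector with law P, let ε ∈ (0,1), let g = (g_j)_{j=1,…,l} with each g_j(x;·) : ℝ^m → ℝ measurable, b ∈ ℝ^l, and k ∈ ℝ^l with k_j > 0 for all j. Let x̂ ∈ ℝ^d satisfy the chance constraint P(g_j(x̂;ξ) ≤ b_j for all j) ≥ 1−ε, and let ρ = inf{t ∈ ℝ : P(max_j (g_j(x̂;ξ)−b_j)/k_j ≤ t) ≥ 1−ε}. Consider the reconstructed robust problem: minimize f(x) subject to 'g_j(x;z) ≤ b_j for all j, for every z ∈ ℝ^m with g_j(x̂;z) ≤ b_j + ρ k_j for all j'. Then ρ ≤ 0, x̂ is feasible for this robust problem, and any optimal solution x̃ of it satisfies both P(g_j(x̃;ξ) ≤ b_j for all j) ≥ 1−ε and f(x̃) ≤ f(x̂); i.e., reconstruction yields a chance-feasible solution with objective value at least as good as that of x̂. -/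
/-!
The scaled violation `T = max_j (g_j(x̂;ξ) - b_j)/k_j` satisfies `{T ≤ t} ⊆ {g(x̂;ξ) ≤ b + t k}`,
with equality at `t = 0`.
Chance feasibility of `x̂` says `0` lies in `{t | 1 - ε ≤ P(T ≤ t)}`, so `ρ ≤ 0`, and right-continuity
of the distribution function of `T` puts `ρ` itself in that set. Hence the uncertainty set is
contained in `{z | g(x̂;z) ≤ b}` (so `x̂` is robust feasible and `f x̃ ≤ f x̂`), and it carries
probability at least `1 - ε`, which every robust feasible `x̃` inherits.
-/

open MeasureTheory
open scoped ENNReal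

section Quantile

variable {Ω : Type*} [MeasurableSpace Ω] {μ : Measure Ω} {T : Ω → ℝ} {c : ℝ≥0∞}

theorem isUpperSet_setOf_le_measure_le : IsUpperSet {t : ℝ | c ≤ μ {ω | T ω ≤ t}} :=
  fun _ _ hst hs => hs.trans (measure_mono fun _ hω => le_trans hω hst)

/-- Right-continuity of the distribution function of `T`; if the set is unbounded below, it is
all of `ℝ` and so contains the junk value `sInf = 0`. -/
theorem csInf_mem_setOf_le_measure_le [IsFiniteMeasure μ] (hT : AEMeasurable T μ)
    (hne : {t : ℝ | c ≤ μ {ω | T ω ≤ t}}.Nonempty) :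
    sInf {t : ℝ | c ≤ μ {ω | T ω ≤ t}} ∈ {t : ℝ | c ≤ μ {ω | T ω ≤ t}} := by
  set S := {t : ℝ | c ≤ μ {ω | T ω ≤ t}}
  by_cases hbdd : BddBelow S
  · obtain ⟨u, hu_anti, hu_lim, hu_mem⟩ := exists_seq_tendsto_sInf hne hbdd
    have hinter : {ω | T ω ≤ sInf S} = ⋂ n, {ω | T ω ≤ u n} := by
      ext ω
      simp only [Set.mem_ofPred_eq, Set.mem_iInter]
      exact ⟨fun h n => h.trans (csInf_le hbdd (hu_mem n)), fun h => ge_of_tendsto' hu_lim h⟩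
    have hanti : Antitone fun n => {ω | T ω ≤ u n} :=
      fun _ _ hmn _ hω => le_trans hω (hu_anti hmn)
    show c ≤ μ {ω | T ω ≤ sInf S}
    rw [hinter, hanti.measure_iInter (fun n => nullMeasurableSet_le hT aemeasurable_const)
      ⟨0, measure_ne_top μ _⟩]
    exact le_iInf hu_mem
  · obtain ⟨s, hs, hs_neg⟩ := not_bddBelow_iff.1 hbdd 0
    rw [Real.sInf_of_not_bddBelow hbdd]
    exact isUpperSet_setOf_le_measure_le hs_neg.le hs

end Quantile

theorem le_add_mul_of_iSup_div_le {ι : Type*} [Finite ι] {a b k : ι → ℝ} (hk : ∀ j, 0 < k j)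
    {t : ℝ} (h : ⨆ j, (a j - b j) / k j ≤ t) (j : ι) : a j ≤ b j + t * k j := by
  have := (le_ciSup (Set.finite_range _).bddAbove j).trans h
  rw [div_le_iff₀ (hk j)] at this
  linarith

theorem reconstruction_monotone_improvement_general
    {m d l : ℕ}
    {Ω : Type*} [MeasurableSpace Ω] (P : Measure Ω) [IsProbabilityMeasure P]
    (ξ : Ω → (Fin m → ℝ)) (hξ : Measurable ξ)
    (ε : ℝ)
    (g : (Fin d → ℝ) → (Fin m → ℝ) → Fin l → ℝ)
    (hg : ∀ (x : Fin d → ℝ) (j : Fin l), Measurable fun z => g x z j)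
    (b k : Fin l → ℝ) (hk : ∀ j, 0 < k j)
    (f : (Fin d → ℝ) → ℝ)
    (xhat : Fin d → ℝ)
    (hxhat : ENNReal.ofReal (1 - ε) ≤ P {ω | ∀ j, g xhat (ξ ω) j ≤ b j})
    (ρ : ℝ)
    (hρ : ρ = sInf {t : ℝ | ENNReal.ofReal (1 - ε) ≤
      P {ω | (⨆ j : Fin l, (g xhat (ξ ω) j - b j) / k j) ≤ t}}) :
    ρ ≤ 0 ∧
    (∀ z : Fin m → ℝ,
      (∀ j, g xhat z j ≤ b j + ρ * k j) → ∀ j, g xhat z j ≤ b j) ∧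
    (∀ xtilde : Fin d → ℝ,
      ((∀ z : Fin m → ℝ,
          (∀ j, g xhat z j ≤ b j + ρ * k j) → ∀ j, g xtilde z j ≤ b j) ∧
        (∀ x : Fin d → ℝ,
          (∀ z : Fin m → ℝ,
            (∀ j, g xhat z j ≤ b j + ρ * k j) → ∀ j, g x z j ≤ b j) →
          f xtilde ≤ f x)) →
      ENNReal.ofReal (1 - ε) ≤ P {ω | ∀ j, g xtilde (ξ ω) j ≤ b j} ∧
        f xtilde ≤ f xhat) := by
  have hT : Measurable fun ω => ⨆ j, (g xhat (ξ ω) j - b j) / k j :=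
    Measurable.iSup fun j => (((hg xhat j).comp hξ).sub_const _).div_const _
  have h0 : (0 : ℝ) ∈ {t : ℝ | ENNReal.ofReal (1 - ε) ≤
      P {ω | (⨆ j : Fin l, (g xhat (ξ ω) j - b j) / k j) ≤ t}} :=
    hxhat.trans <| measure_mono fun ω hω => Real.iSup_nonpos fun j =>
      div_nonpos_of_nonpos_of_nonneg (sub_nonpos.2 (hω j)) (hk j).le
  have hρ0 : ρ ≤ 0 := hρ ▸ Real.sInf_nonpos' ⟨0, h0, le_rfl⟩
  have hρmem : ENNReal.ofReal (1 - ε) ≤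
      P {ω | (⨆ j : Fin l, (g xhat (ξ ω) j - b j) / k j) ≤ ρ} :=
    hρ ▸ csInf_mem_setOf_le_measure_le hT.aemeasurable ⟨0, h0⟩
  have hxhat_robust : ∀ z : Fin m → ℝ,
      (∀ j, g xhat z j ≤ b j + ρ * k j) → ∀ j, g xhat z j ≤ b j := fun z hz j => by
    nlinarith [hz j, hk j]
  refine ⟨hρ0, hxhat_robust, fun xtilde ⟨hfeas, hopt⟩ => ⟨?_, hopt xhat hxhat_robust⟩⟩
  exact hρmem.trans <| measure_mono fun ω hω =>
    hfeas (ξ ω) (le_add_mul_of_iSup_div_le hk hω)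

/-- monotonic objective improvement: if `x̂` satisfies the joint chance
constraint and `ρ` is the `(1-ε)`-quantile of `max_j (g_j(x̂;ξ)−b_j)/k_j`, then `ρ ≤ 0`,
`x̂` is feasible for the reconstructed robust problem, and any optimal solution `x̃` of it
is chance-feasible with `f(x̃) ≤ f(x̂)`. -/
theorem reconstruction_monotone_improvement
    {m d l : ℕ} (hl : 0 < l)
    {Ω : Type*} [MeasurableSpace Ω] (P : Measure Ω) [IsProbabilityMeasure P]
    (ξ : Ω → (Fin m → ℝ)) (hξ : Measurable ξ)
    (ε : ℝ) (hε : ε ∈ Set.Ioo (0 : ℝ) 1)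
    (g : (Fin d → ℝ) → (Fin m → ℝ) → Fin l → ℝ)
    (hg : ∀ (x : Fin d → ℝ) (j : Fin l), Measurable fun z => g x z j)
    (b k : Fin l → ℝ) (hk : ∀ j, 0 < k j)
    (f : (Fin d → ℝ) → ℝ)
    (xhat : Fin d → ℝ)
    (hxhat : ENNReal.ofReal (1 - ε) ≤ P {ω | ∀ j, g xhat (ξ ω) j ≤ b j})
    (ρ : ℝ)
    (hρ : ρ = sInf {t : ℝ | ENNReal.ofReal (1 - ε) ≤
      P {ω | (⨆ j : Fin l, (g xhat (ξ ω) j - b j) / k j) ≤ t}}) :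
    ρ ≤ 0 ∧
    (∀ z : Fin m → ℝ,
      (∀ j, g xhat z j ≤ b j + ρ * k j) → ∀ j, g xhat z j ≤ b j) ∧
    (∀ xtilde : Fin d → ℝ,
      ((∀ z : Fin m → ℝ,
          (∀ j, g xhat z j ≤ b j + ρ * k j) → ∀ j, g xtilde z j ≤ b j) ∧
        (∀ x : Fin d → ℝ,
          (∀ z : Fin m → ℝ,
            (∀ j, g xhat z j ≤ b j + ρ * k j) → ∀ j, g x z j ≤ b j) →
          f xtilde ≤ f x)) →
      ENNReal.ofReal (1 - ε) ≤ P {ω | ∀ j, g xtilde (ξ ω) j ≤ b j} ∧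
        f xtilde ≤ f xhat) :=
  reconstruction_monotone_improvement_general P ξ hξ ε g hg b k hk f xhat hxhat ρ hρ
end
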